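/- arXiv:2412.08621 — 7 statements merged into one kernel-verified Lean document; each statement's English description precedes it below -/
import Mathlib

section
/- Let K be a field containing an element ω of multiplicative order 6, and let G = (C6 × C2) ⋊ C2 act on K[x1,x2,t] where a·x1 = ω^{-1}x1, a·x2 = ωx2, a·t = t; b·x1 = x1, b·x2 = −x2, b·t = −t; c·x1 = x2, c·x2 = x1, c·t = −t (G generated by a of order 6, b,c of order 2 with ba=ab, cac=a^{-1}, cbc=a^3b). Then the invariant ring K[x1,x2,t]^G is generated by (x1x2)^2, x1^6 + x2^6, t^2, and (x1^6 − x2^6)x1x2t. -/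
/-!
The substitutions `a` and `b` act diagonally on monomials, so a polynomial fixed by them is a
combination of monomials `x₁^i x₂^j t^e` with `i ≡ j [MOD 6]` and `j + e` even. As `ω³ = -1 ≠ 1`,
`2` is invertible and an invariant `f` is half of `f + c • f`, a combination of the symmetrised
monomials `x₁^i x₂^j t^e + c • (x₁^i x₂^j t^e)`. Each of these is `(x₁x₂)^{2i'} t^{2e'}` times
`x₁^{6k} + x₂^{6k}` or `(x₁^{6k} - x₂^{6k}) x₁x₂t`, and both families satisfy the recurrence
`u (k + 2) = (x₁⁶ + x₂⁶) u (k + 1) - (x₁x₂)⁶ u k`. Conversely, the four generators are fixed by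
`a`, `b` and `c`.
-/

open MvPolynomial

theorem mul_pow_add_mul_pow_mem {R S : Type*} [CommRing R] [SetLike S R] [SubringClass S R]
    {s : S} {P Q y z : R} (hadd : P + Q ∈ s) (hmul : P * Q ∈ s) (h0 : y + z ∈ s)
    (h1 : y * P + z * Q ∈ s) (k : ℕ) : y * P ^ k + z * Q ^ k ∈ s := by
  induction k using Nat.twoStepInduction with
  | zero => simpa using h0
  | one => simpa using h1
  | more k ih₀ ih₁ =>
    have hrec : y * P ^ (k + 2) + z * Q ^ (k + 2) =
        (P + Q) * (y * P ^ (k + 1) + z * Q ^ (k + 1)) - P * Q * (y * P ^ k + z * Q ^ k) := by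
      ring
    rw [hrec]
    exact sub_mem (mul_mem hadd ih₁) (mul_mem hmul ih₀)

theorem coeff_aeval_C_mul_X {σ R : Type*} [CommSemiring R] (c : σ → R)
    (f : MvPolynomial σ R) (m : σ →₀ ℕ) :
    coeff m (aeval (fun i => C (c i) * X i) f) = (m.prod fun i k => c i ^ k) * coeff m f := by
  classical
  induction f using MvPolynomial.induction_on' with
  | monomial n a =>
    have h : aeval (fun i => C (c i) * X i) (monomial n a) =
        monomial n ((n.prod fun i k => c i ^ k) * a) := by
      rw [aeval_monomial, monomial_eq]
      simp only [mul_pow, Finsupp.prod_mul, ← C_pow, ← map_finsuppProd, C_mul, algebraMap_eq]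
      ring
    rw [h, coeff_monomial, coeff_monomial]
    split_ifs with hnm
    · rw [hnm]
    · rw [mul_zero]
  | add p q hp hq => simp only [map_add, coeff_add, hp, hq, mul_add]

theorem prod_pow_eq_one_of_aeval_C_mul_X_eq_self {σ R : Type*} [CommRing R] [IsDomain R]
    {c : σ → R} {f : MvPolynomial σ R} (hf : aeval (fun i => C (c i) * X i) f = f)
    {m : σ →₀ ℕ} (hm : m ∈ f.support) : (m.prod fun i k => c i ^ k) = 1 := by
  have h := coeff_aeval_C_mul_X c f m
  rwa [hf, eq_comm, mul_eq_right₀ (mem_support_iff.mp hm)] at h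

theorem aeval_eq_self_of_mem_adjoin {σ R : Type*} [CommSemiring R]
    {v : σ → MvPolynomial σ R} {s : Set (MvPolynomial σ R)} (hs : ∀ g ∈ s, aeval v g = g)
    {f : MvPolynomial σ R} (hf : f ∈ Algebra.adjoin R s) : aeval v f = f :=
  (AlgHom.eqOn_adjoin_iff (φ := aeval v) (ψ := AlgHom.id R _)).mpr hs hf

theorem aeval_monomial_fin_three {R : Type*} [CommSemiring R]
    (v : Fin 3 → MvPolynomial (Fin 3) R) (m : Fin 3 →₀ ℕ) (a : R) :
    aeval v (monomial m a) = C a * (v 0 ^ m 0 * v 1 ^ m 1 * v 2 ^ m 2) := by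
  rw [aeval_monomial, Finsupp.prod_pow, Fin.prod_univ_three, algebraMap_eq]

theorem neg_one_ne_one_of_orderOf_eq_six {R : Type*} [Ring R] [NoZeroDivisors R] {x : R}
    (hx : orderOf x = 6) : (-1 : R) ≠ 1 := by
  have hne : x ^ 3 ≠ 1 := pow_ne_one_of_lt_orderOf (by norm_num) (by omega)
  have hsq : (x ^ 3) ^ 2 = 1 := by
    rw [← pow_mul, show 3 * 2 = orderOf x by omega, pow_orderOf_eq_one]
  rcases sq_eq_one_iff.mp hsq with h | h
  · exact absurd h hne
  · exact h ▸ hne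

section Invariants

variable (R : Type*) [CommRing R]

def basicInvariants : Set (MvPolynomial (Fin 3) R) :=
  {(X 0 * X 1) ^ 2, X 0 ^ 6 + X 1 ^ 6, X 2 ^ 2, (X 0 ^ 6 - X 1 ^ 6) * (X 0 * X 1) * X 2}

variable {R}

theorem forall_mem_basicInvariants {p : MvPolynomial (Fin 3) R → Prop} :
    (∀ g ∈ basicInvariants R, p g) ↔ p ((X 0 * X 1) ^ 2) ∧ p (X 0 ^ 6 + X 1 ^ 6) ∧ p (X 2 ^ 2) ∧
      p ((X 0 ^ 6 - X 1 ^ 6) * (X 0 * X 1) * X 2) := by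
  simp only [basicInvariants, Set.mem_insert_iff, Set.mem_singleton_iff, forall_eq_or_imp,
    forall_eq]

theorem aeval_neg_eq_self_of_mem_basicInvariants :
    ∀ g ∈ basicInvariants R, aeval ![X 0, -X 1, -X 2] g = g := by
  refine forall_mem_basicInvariants.mpr ⟨?_, ?_, ?_, ?_⟩ <;>
    simp only [map_mul, map_pow, map_add, map_sub, aeval_X, Matrix.cons_val_zero,
      Matrix.cons_val_one, Matrix.cons_val_two, Matrix.head_cons, Matrix.tail_cons] <;> ring

theorem aeval_swap_eq_self_of_mem_basicInvariants :
    ∀ g ∈ basicInvariants R, aeval ![X 1, X 0, -X 2] g = g := by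
  refine forall_mem_basicInvariants.mpr ⟨?_, ?_, ?_, ?_⟩ <;>
    simp only [map_mul, map_pow, map_add, map_sub, aeval_X, Matrix.cons_val_zero,
      Matrix.cons_val_one, Matrix.cons_val_two, Matrix.head_cons, Matrix.tail_cons] <;> ring

theorem aeval_scale_eq_self_of_mem_basicInvariants {ζ ζ' : R} (hζ : ζ' * ζ = 1) (h6 : ζ ^ 6 = 1) :
    ∀ g ∈ basicInvariants R, aeval ![C ζ' * X 0, C ζ * X 1, X 2] g = g := by
  have hC : C ζ' * C ζ = (1 : MvPolynomial (Fin 3) R) := by rw [← C_mul, hζ, C_1]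
  have hC6 : C ζ ^ 6 = (1 : MvPolynomial (Fin 3) R) := by rw [← C_pow, h6, C_1]
  have hC6' : C ζ' ^ 6 = (1 : MvPolynomial (Fin 3) R) := by
    rw [← C_pow, ← one_mul (ζ' ^ 6), ← h6, ← mul_pow, mul_comm, hζ, one_pow, C_1]
  refine forall_mem_basicInvariants.mpr ⟨?_, ?_, ?_, ?_⟩ <;>
    simp only [map_mul, map_pow, map_add, map_sub, aeval_X, Matrix.cons_val_zero,
      Matrix.cons_val_one, Matrix.cons_val_two, Matrix.head_cons, Matrix.tail_cons]
  · linear_combination (C ζ' * C ζ + 1) * (X 0 * X 1) ^ 2 * hC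
  · linear_combination X 0 ^ 6 * hC6' + X 1 ^ 6 * hC6
  · linear_combination (X 0 ^ 6 * (C ζ' * C ζ) * (X 0 * X 1) * X 2) * hC6'
      - (X 1 ^ 6 * (C ζ' * C ζ) * (X 0 * X 1) * X 2) * hC6
      + ((X 0 ^ 6 - X 1 ^ 6) * (X 0 * X 1) * X 2) * hC

theorem basicInvariants_mem_adjoin :
    ((X 0 * X 1) ^ 2 ∈ Algebra.adjoin R (basicInvariants R)) ∧
      (X 0 ^ 6 + X 1 ^ 6 ∈ Algebra.adjoin R (basicInvariants R)) ∧
      (X 2 ^ 2 ∈ Algebra.adjoin R (basicInvariants R)) ∧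
      ((X 0 ^ 6 - X 1 ^ 6) * (X 0 * X 1) * X 2 ∈ Algebra.adjoin R (basicInvariants R)) :=
  forall_mem_basicInvariants.mp fun _ hg => Algebra.subset_adjoin hg

theorem X_pow_six_mul_mem_adjoin_basicInvariants {y z : MvPolynomial (Fin 3) R}
    (h0 : y + z ∈ Algebra.adjoin R (basicInvariants R))
    (h1 : y * X 0 ^ 6 + z * X 1 ^ 6 ∈ Algebra.adjoin R (basicInvariants R)) (k : ℕ) :
    y * X 0 ^ (6 * k) + z * X 1 ^ (6 * k) ∈ Algebra.adjoin R (basicInvariants R) := by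
  obtain ⟨hu, hp, -, -⟩ := basicInvariants_mem_adjoin (R := R)
  have hpq : X 0 ^ 6 * X 1 ^ 6 ∈ Algebra.adjoin R (basicInvariants R) := by
    convert pow_mem hu 3 using 1; ring
  simpa only [pow_mul] using mul_pow_add_mul_pow_mem hp hpq h0 h1 k

theorem X_pow_mul_add_swap_mem_adjoin_basicInvariants {a b e : ℕ} (h6 : b ≡ a [MOD 6])
    (h2 : Even (b + e)) :
    (X 0 ^ a * X 1 ^ b * X 2 ^ e + X 1 ^ a * X 0 ^ b * (-X 2) ^ e : MvPolynomial (Fin 3) R) ∈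
      Algebra.adjoin R (basicInvariants R) := by
  wlog hba : b ≤ a generalizing a b
  · have hsign : ((-1) ^ e : MvPolynomial (Fin 3) R) ∈ Algebra.adjoin R (basicInvariants R) :=
      pow_mem (neg_mem (one_mem _)) e
    have h2' : Even (a + e) := by
      rw [Nat.even_add] at h2 ⊢
      rw [← h2, Nat.even_iff, Nat.even_iff]
      unfold Nat.ModEq at h6
      omega
    have hsq : ((-1 : MvPolynomial (Fin 3) R) ^ e) ^ 2 = 1 := by
      rw [← pow_mul, mul_comm, pow_mul, neg_one_sq, one_pow]
    convert mul_mem hsign (this h6.symm h2' (le_of_not_ge hba)) using 1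
    rw [neg_pow, neg_pow]
    linear_combination (-(X 0 ^ a * X 1 ^ b * X 2 ^ e)) * hsq
  obtain ⟨hu, hp, hs, hw⟩ := basicInvariants_mem_adjoin (R := R)
  obtain ⟨k, rfl⟩ : ∃ k, a = b + 6 * k := ⟨(a - b) / 6, by unfold Nat.ModEq at h6; omega⟩
  rcases Nat.even_or_odd e with he | he
  · obtain ⟨i, rfl⟩ : Even b := (Nat.even_add.mp h2).mpr he
    obtain ⟨j, rfl⟩ := he
    have hq := X_pow_six_mul_mem_adjoin_basicInvariants (y := 1) (z := 1)
      (add_mem (one_mem _) (one_mem _)) (by simpa using hp) k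
    convert mul_mem (mul_mem (pow_mem hu i) (pow_mem hs j)) hq using 1
    rw [Even.neg_pow ⟨j, rfl⟩]
    ring
  · obtain ⟨i, rfl⟩ : Odd b :=
      Nat.not_even_iff_odd.mp fun hb => Nat.not_even_iff_odd.mpr he ((Nat.even_add.mp h2).mp hb)
    obtain ⟨j, rfl⟩ := he
    have hr := X_pow_six_mul_mem_adjoin_basicInvariants (y := X 0 * X 1 * X 2)
      (z := -(X 0 * X 1 * X 2)) (by simp) (by convert hw using 1; ring) k
    convert mul_mem (mul_mem (pow_mem hu i) (pow_mem hs j)) hr using 1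
    rw [Odd.neg_pow ⟨j, rfl⟩]
    ring

variable {K : Type*} [Field K]

theorem modEq_six_of_aeval_eq_self {ζ : K} (hζ : orderOf ζ = 6) {f : MvPolynomial (Fin 3) K}
    (hf : aeval ![C ζ⁻¹ * X 0, C ζ * X 1, X 2] f = f) {m : Fin 3 →₀ ℕ} (hm : m ∈ f.support) :
    m 1 ≡ m 0 [MOD 6] := by
  have hdiag : ![C ζ⁻¹ * X 0, C ζ * X 1, X 2] = fun i => C (![ζ⁻¹, ζ, 1] i) * X i := by
    funext i; fin_cases i <;> simp
  rw [hdiag] at hf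
  have h := prod_pow_eq_one_of_aeval_C_mul_X_eq_self hf hm
  have hζ0 : ζ ≠ 0 := by rintro rfl; simp at hζ
  simp only [Finsupp.prod_pow, Fin.prod_univ_three, Matrix.cons_val_zero, Matrix.cons_val_one,
    Matrix.cons_val_two, Matrix.head_cons, Matrix.tail_cons, one_pow, mul_one, inv_pow] at h
  rw [inv_mul_eq_one₀ (pow_ne_zero _ hζ0),
    (orderOf_pos_iff.mp (by omega)).pow_eq_pow_iff_modEq, hζ] at h
  exact h.symm

theorem even_of_aeval_neg_eq_self (hK : (-1 : K) ≠ 1) {f : MvPolynomial (Fin 3) K}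
    (hf : aeval ![X 0, -X 1, -X 2] f = f) {m : Fin 3 →₀ ℕ} (hm : m ∈ f.support) :
    Even (m 1 + m 2) := by
  have hdiag : (![X 0, -X 1, -X 2] : Fin 3 → MvPolynomial (Fin 3) K) =
      fun i => C (![1, -1, -1] i : K) * X i := by
    funext i; fin_cases i <;> simp
  rw [hdiag] at hf
  have h := prod_pow_eq_one_of_aeval_C_mul_X_eq_self hf hm
  simp only [Finsupp.prod_pow, Fin.prod_univ_three, Matrix.cons_val_zero, Matrix.cons_val_one,
    Matrix.cons_val_two, Matrix.head_cons, Matrix.tail_cons, one_pow, one_mul, ← pow_add] at h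
  exact (neg_one_pow_eq_one_iff_even hK).mp h

theorem mem_adjoin_basicInvariants_of_aeval_eq_self {ζ : K} (hζ : orderOf ζ = 6)
    {f : MvPolynomial (Fin 3) K} (ha : aeval ![C ζ⁻¹ * X 0, C ζ * X 1, X 2] f = f)
    (hb : aeval ![X 0, -X 1, -X 2] f = f) (hc : aeval ![X 1, X 0, -X 2] f = f) :
    f ∈ Algebra.adjoin K (basicInvariants K) := by
  have hK := neg_one_ne_one_of_orderOf_eq_six hζ
  have h2 : (2 : K) ≠ 0 := fun h =>
    hK (neg_eq_of_add_eq_zero_left (by rw [one_add_one_eq_two, h]))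
  have hsum : C 2 * f = ∑ m ∈ f.support, C (coeff m f) *
      (X 0 ^ m 0 * X 1 ^ m 1 * X 2 ^ m 2 + X 1 ^ m 0 * X 0 ^ m 1 * (-X 2) ^ m 2) := by
    calc C 2 * f = f + aeval ![X 1, X 0, -X 2] f := by rw [hc, map_ofNat, two_mul]
      _ = ∑ m ∈ f.support, (aeval X (monomial m (coeff m f)) +
            aeval ![X 1, X 0, -X 2] (monomial m (coeff m f))) := by
        conv_lhs => rw [f.as_sum]
        simp only [map_sum, aeval_X_left_apply, Finset.sum_add_distrib]
      _ = _ := by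
        refine Finset.sum_congr rfl fun m _ => ?_
        simp only [aeval_monomial_fin_three, Matrix.cons_val_zero, Matrix.cons_val_one,
          Matrix.cons_val_two, Matrix.head_cons, Matrix.tail_cons, mul_add]
  have h2f : C 2 * f ∈ Algebra.adjoin K (basicInvariants K) := by
    rw [hsum]
    refine sum_mem fun m hm => mul_mem (Subalgebra.algebraMap_mem _ _) ?_
    exact X_pow_mul_add_swap_mem_adjoin_basicInvariants (modEq_six_of_aeval_eq_self hζ ha hm)
      (even_of_aeval_neg_eq_self hK hb hm)
  have hf : f = C 2⁻¹ * (C 2 * f) := by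
    rw [← mul_assoc, ← C_mul, inv_mul_cancel₀ h2, C_1, one_mul]
  rw [hf]
  exact mul_mem (Subalgebra.algebraMap_mem _ _) h2f

end Invariants

/-- For `G = (C6 × C2) ⋊ C2` acting on `K[x1,x2,t]` (with `x1 = X 0`, `x2 = X 1`, `t = X 2`)
via `a·x1 = ω⁻¹x1, a·x2 = ωx2, a·t = t`; `b·x1 = x1, b·x2 = −x2, b·t = −t`;
`c·x1 = x2, c·x2 = x1, c·t = −t`, the invariant ring is generated by
`(x1x2)^2`, `x1^6 + x2^6`, `t^2` and `(x1^6 − x2^6)x1x2t`.  A polynomial is `G`-invariant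
iff it is fixed by the substitutions corresponding to the three generators `a, b, c`. -/
theorem stmt3 {K : Type*} [Field K] (ω : Kˣ) (hω : orderOf ω = 6) :
    ∀ f : MvPolynomial (Fin 3) K,
      (aeval ![C ((ω : K)⁻¹) * X 0, C (ω : K) * X 1, (X 2 : MvPolynomial (Fin 3) K)] f = f ∧
       aeval ![(X 0 : MvPolynomial (Fin 3) K), -X 1, -X 2] f = f ∧
       aeval ![(X 1 : MvPolynomial (Fin 3) K), X 0, -X 2] f = f) ↔
      f ∈ Algebra.adjoin K
        ({(X 0 * X 1) ^ 2, X 0 ^ 6 + X 1 ^ 6, X 2 ^ 2,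
          (X 0 ^ 6 - X 1 ^ 6) * (X 0 * X 1) * X 2} : Set (MvPolynomial (Fin 3) K)) := by
  have hζ : orderOf (ω : K) = 6 := by rw [orderOf_units, hω]
  intro f
  constructor
  · rintro ⟨ha, hb, hc⟩
    exact mem_adjoin_basicInvariants_of_aeval_eq_self hζ ha hb hc
  · intro hf
    have h6 : (ω : K) ^ 6 = 1 := by rw [← hζ, pow_orderOf_eq_one]
    exact ⟨aeval_eq_self_of_mem_adjoin
        (aeval_scale_eq_self_of_mem_basicInvariants (inv_mul_cancel₀ ω.ne_zero) h6) hf,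
      aeval_eq_self_of_mem_adjoin aeval_neg_eq_self_of_mem_basicInvariants hf,
      aeval_eq_self_of_mem_adjoin aeval_swap_eq_self_of_mem_basicInvariants hf⟩
end

section
/- Let K be a field containing an element ω of multiplicative order 3 with |K| ≠ 4, and let the Heisenberg group H27 = ⟨a,b,c | a^3=b^3=c^3=1, a^{-1}b^{-1}ab=c, ac=ca, bc=cb⟩ act on V=K^3 by a = diag(1,ω,ω^2), b the cyclic permutation matrix (x1→x2→x3→x1 on coordinates), c = ω·Id. Then β_sep(H27, V) ≥ 9; that is, there exist v, v' ∈ V lying in different H27-orbits such that f(v) = f(v') for every H27-invariant polynomial f of degree less than 9. -/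
open MvPolynomial Matrix

/-- Coefficients of a diagonal substitution. -/
lemma coeff_aeval_diag' {K : Type*} [CommSemiring K] (c : Fin 3 → K)
    (f : MvPolynomial (Fin 3) K) (d : Fin 3 →₀ ℕ) :
    coeff d (aeval (fun i => C (c i) * X i) f) = (∏ i, c i ^ d i) * coeff d f := by
  induction f using MvPolynomial.induction_on' with
  | add p q hp hq => simp only [map_add, coeff_add, hp, hq, mul_add]
  | monomial u a =>
    have key : aeval (fun i => C (c i) * X i) (monomial u a)
        = monomial u (a * ∏ i, c i ^ u i) := by
      rw [aeval_monomial, monomial_eq, Finsupp.prod_fintype _ _ (fun i => pow_zero _),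
          Finsupp.prod_fintype _ _ (fun i => pow_zero _)]
      simp only [algebraMap_eq, _root_.map_mul, _root_.map_prod, map_pow, mul_pow,
        Finset.prod_mul_distrib]
      ring
    rw [key, coeff_monomial, coeff_monomial]
    split_ifs with h
    · subst h; ring
    · ring

lemma exists_good {K : Type*} [Field K] (ω : K) (hω3 : ω ^ 3 = 1) (hω1 : ω ≠ 1)
    (hK : Nat.card K ≠ 4) : ∃ l : K, l ≠ 0 ∧ l ^ 3 ≠ 1 := by
  by_contra h
  push_neg at h
  have hω0 : ω ≠ 0 := by
    intro h0; rw [h0] at hω3; simp at hω3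
  have hω21 : ω ^ 2 ≠ 1 := by
    intro h2; exact hω1 (by rw [← hω3, pow_succ, h2, one_mul])
  have hωω2 : ω ≠ ω ^ 2 := by
    intro he
    exact hω1 (mul_left_cancel₀ hω0 (by rw [mul_one, ← sq, ← he])).symm
  classical
  set p : Polynomial K := Polynomial.X ^ 4 - Polynomial.X with hp
  have hp0 : p ≠ 0 := by
    intro h0
    have : p.coeff 4 = 1 := by
      simp [hp, Polynomial.coeff_X_pow, Polynomial.coeff_X]
    rw [h0] at this
    simp at this
  have hroot : ∀ x : K, p.IsRoot x := by
    intro x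
    rcases eq_or_ne x 0 with rfl | hx
    · simp [hp, Polynomial.IsRoot]
    · have h3 := h x hx
      have : x ^ 4 = x := by
        calc x ^ 4 = x ^ 3 * x := by ring
        _ = x := by rw [h3, one_mul]
      simp [hp, Polynomial.IsRoot, this]
  have hfin : (Set.univ : Set K).Finite :=
    (Polynomial.finite_setOf_isRoot hp0).subset (fun x _ => hroot x)
  have : Finite K := Set.finite_univ_iff.mp hfin
  have : Fintype K := Fintype.ofFinite K
  have hdeg : p.natDegree = 4 := by
    rw [hp]; compute_degree!
  have hle : Fintype.card K ≤ 4 := by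
    rw [← hdeg]
    refine Polynomial.card_le_degree_of_subset_roots (Z := Finset.univ) ?_
    intro x hx
    rw [Polynomial.mem_roots hp0]
    exact hroot x
  have hcard : ({0, 1, ω, ω ^ 2} : Finset K).card = 4 := by
    rw [Finset.card_insert_of_notMem (by simp [hω0.symm, (one_ne_zero : (1:K) ≠ 0).symm,
          (pow_ne_zero 2 hω0).symm]),
        Finset.card_insert_of_notMem (by simp [(Ne.symm hω1), (Ne.symm hω21)]),
        Finset.card_insert_of_notMem (by simp [hωω2]),
        Finset.card_singleton]
  have hge : 4 ≤ Fintype.card K := by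
    rw [← hcard]; exact Finset.card_le_univ _
  apply hK
  rw [Nat.card_eq_fintype_card]
  omega

lemma finsupp3_ext {d e : Fin 3 →₀ ℕ} (h0 : d 0 = e 0) (h1 : d 1 = e 1)
    (h2 : d 2 = e 2) : d = e := by
  ext j
  match j with
  | ⟨0, _⟩ => exact h0
  | ⟨1, _⟩ => exact h1
  | ⟨2, _⟩ => exact h2

/-- For the Heisenberg group `H27` acting on `V = K^3` via `a = diag(1,ω,ω²)`,
`b` the cyclic permutation matrix and `c = ω·Id` (with `ω` of multiplicative order 3,
`|K| ≠ 4`), there are `v, v'` in different `H27`-orbits on which all invariants of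
degree `< 9` agree; so `β_sep(H27, V) ≥ 9`.  The group generated by the three matrices
is finite, so its orbit relation coincides with the `Submonoid.closure` orbit relation;
a polynomial is `H27`-invariant iff it is fixed by the three generator substitutions. -/
theorem stmt7 {K : Type*} [Field K] (ω : K) (hω3 : ω ^ 3 = 1) (hω1 : ω ≠ 1)
    (hK : Nat.card K ≠ 4) :
    ∀ Ma Mb Mc : Matrix (Fin 3) (Fin 3) K,
      Ma = Matrix.diagonal ![1, ω, ω ^ 2] →
      Mb = !![0,1,0;0,0,1;1,0,0] →
      Mc = ω • (1 : Matrix (Fin 3) (Fin 3) K) →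
      ∃ v v' : Fin 3 → K,
        (¬ ∃ M ∈ Submonoid.closure {Ma, Mb, Mc}, M.mulVec v = v') ∧
        ∀ f : MvPolynomial (Fin 3) K,
          aeval ![(X 0 : MvPolynomial (Fin 3) K), C ω * X 1, C (ω ^ 2) * X 2] f = f →
          aeval ![(X 1 : MvPolynomial (Fin 3) K), X 2, X 0] f = f →
          aeval ![C ω * (X 0 : MvPolynomial (Fin 3) K), C ω * X 1, C ω * X 2] f = f →
          f.totalDegree < 9 →
          eval v f = eval v' f := by
  intro Ma Mb Mc hMa hMb hMc
  obtain ⟨l, hl0, hl3⟩ := exists_good ω hω3 hω1 hK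
  refine ⟨![1, l, 0], ![l, 1, 0], ?_, ?_⟩
  · -- the two vectors are in different orbits
      rintro ⟨M, hM, hMv⟩
      set g : (Fin 3 → K) → K := fun x => x 0 ^ 3 * x 1 ^ 6 + x 0 ^ 6 * x 2 ^ 3 + x 1 ^ 3 * x 2 ^ 6
        with hg
      have hga : ∀ x, g (Ma.mulVec x) = g x := by
        intro x
        have hv : ∀ i, Ma.mulVec x i = ![1, ω, ω ^ 2] i * x i := by
          intro i; rw [hMa, mulVec_diagonal]
        simp only [hg, hv]
        simp only [Matrix.cons_val_zero, Matrix.cons_val_one, Matrix.head_cons,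
          Matrix.cons_val_two, Matrix.tail_cons]
        linear_combination ((ω ^ 3 + 1) * (x 0 ^ 3 * x 1 ^ 6) + (ω ^ 3 + 1) * (x 0 ^ 6 * x 2 ^ 3)
          + (ω ^ 12 + ω ^ 9 + ω ^ 6 + ω ^ 3 + 1) * (x 1 ^ 3 * x 2 ^ 6)) * hω3
      have hgb : ∀ x, g (Mb.mulVec x) = g x := by
        intro x
        have hv : ∀ i, Mb.mulVec x i = ![x 1, x 2, x 0] i := by
          intro i
          fin_cases i <;>
            simp [hMb, Matrix.mulVec, dotProduct, Fin.sum_univ_three]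
        simp only [hg, hv]
        simp only [Matrix.cons_val_zero, Matrix.cons_val_one, Matrix.head_cons,
          Matrix.cons_val_two, Matrix.tail_cons]
        ring
      have hgc : ∀ x, g (Mc.mulVec x) = g x := by
        intro x
        have hv : ∀ i, Mc.mulVec x i = ω * x i := by
          intro i
          rw [hMc, Matrix.smul_mulVec, Matrix.one_mulVec]
          simp
        simp only [hg, hv]
        linear_combination ((ω ^ 6 + ω ^ 3 + 1) * (x 0 ^ 3 * x 1 ^ 6 + x 0 ^ 6 * x 2 ^ 3
          + x 1 ^ 3 * x 2 ^ 6)) * hω3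
      have key : ∀ N ∈ Submonoid.closure {Ma, Mb, Mc}, ∀ x, g (N.mulVec x) = g x := by
        intro N hN
        induction hN using Submonoid.closure_induction with
        | mem y hy =>
          rcases hy with rfl | rfl | rfl
          · exact hga
          · exact hgb
          · exact hgc
        | one => intro x; rw [Matrix.one_mulVec]
        | mul y z hy hz ihy ihz =>
          intro x
          rw [← Matrix.mulVec_mulVec, ihy, ihz]
      have hvv := key M hM ![1, l, 0]
      rw [hMv] at hvv
      have hv1 : g ![1, l, 0] = l ^ 6 := by simp [hg]
      have hv2 : g ![l, 1, 0] = l ^ 3 := by simp [hg]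
      rw [hv1, hv2] at hvv
      have : l ^ 3 * (l ^ 3 - 1) = 0 := by linear_combination -hvv
      rcases mul_eq_zero.mp this with h | h
      · exact hl0 (pow_eq_zero_iff (by norm_num) |>.mp h)
      · exact hl3 (by linear_combination h)
  · -- all invariants of degree < 9 agree on the two vectors
    intro f hA hB hC hdeg
    classical
    haveI : Fact (Nat.Prime 3) := ⟨by norm_num⟩
    have hord : orderOf ω = 3 := orderOf_eq_prime hω3 hω1
    have hdvd : ∀ k : ℕ, ω ^ k = 1 → 3 ∣ k := by
      intro k hk
      rw [← hord]
      exact orderOf_dvd_of_pow_eq_one hk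
    -- rewrite the invariance hypotheses
    have hA' : aeval (fun i => C (![1, ω, ω ^ 2] i) * X i) f = f := by
      rw [show (fun i => C (![1, ω, ω ^ 2] i) * X i)
          = ![(X 0 : MvPolynomial (Fin 3) K), C ω * X 1, C (ω ^ 2) * X 2] from by
        funext i; fin_cases i <;> simp]
      exact hA
    have hC' : aeval (fun i => C ((fun _ : Fin 3 => ω) i) * X i) f = f := by
      rw [show (fun i => C ((fun _ : Fin 3 => ω) i) * X i)
          = ![C ω * (X 0 : MvPolynomial (Fin 3) K), C ω * X 1, C ω * X 2] from by
        funext i; fin_cases i <;> simp]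
      exact hC
    -- cyclic permutation
    set π : Fin 3 → Fin 3 := ![1, 2, 0] with hπ
    have hπinj : Function.Injective π := by decide
    have hren : rename π f = f := by
      rw [show rename π f = aeval (X ∘ π) f from by rw [rename_eq_aeval],
        show (X ∘ π : Fin 3 → MvPolynomial (Fin 3) K) = ![X 1, X 2, X 0] from by
          funext i; fin_cases i <;> simp [hπ]]
      exact hB
    have hcyc : ∀ d : Fin 3 →₀ ℕ, coeff (Finsupp.mapDomain π d) f = coeff d f := by
      intro d
      conv_lhs => rw [← hren]
      exact coeff_rename_mapDomain π hπinj f d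
    have hπ0 : ∀ d : Fin 3 →₀ ℕ, (Finsupp.mapDomain π d) 0 = d 2 := fun d => by
      rw [show (0 : Fin 3) = π 2 from rfl, Finsupp.mapDomain_apply hπinj]
    have hπ1 : ∀ d : Fin 3 →₀ ℕ, (Finsupp.mapDomain π d) 1 = d 0 := fun d => by
      rw [show (1 : Fin 3) = π 0 from rfl, Finsupp.mapDomain_apply hπinj]
    have hπ2 : ∀ d : Fin 3 →₀ ℕ, (Finsupp.mapDomain π d) 2 = d 1 := fun d => by
      rw [show (2 : Fin 3) = π 1 from rfl, Finsupp.mapDomain_apply hπinj]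
    -- swap of the first two coordinates
    set s : Fin 3 → Fin 3 := ![1, 0, 2] with hs
    have hsinj : Function.Injective s := by decide
    have hs0 : ∀ d : Fin 3 →₀ ℕ, (Finsupp.mapDomain s d) 0 = d 1 := fun d => by
      rw [show (0 : Fin 3) = s 1 from rfl, Finsupp.mapDomain_apply hsinj]
    have hs1 : ∀ d : Fin 3 →₀ ℕ, (Finsupp.mapDomain s d) 1 = d 0 := fun d => by
      rw [show (1 : Fin 3) = s 0 from rfl, Finsupp.mapDomain_apply hsinj]
    have hs2 : ∀ d : Fin 3 →₀ ℕ, (Finsupp.mapDomain s d) 2 = d 2 := fun d => by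
      conv_lhs => rw [show (2 : Fin 3) = s 2 from rfl, Finsupp.mapDomain_apply hsinj]
    -- constraints on exponents of monomials in the support
    have hconstr : ∀ d ∈ f.support,
        3 ∣ d 0 + d 1 + d 2 ∧ 3 ∣ d 1 + 2 * d 2 ∧ d 0 + d 1 + d 2 ≤ 8 := by
      intro d hd
      have hcne : coeff d f ≠ 0 := mem_support_iff.mp hd
      have hsum : d 0 + d 1 + d 2 ≤ 8 := by
        have h1 := MvPolynomial.le_totalDegree hd
        have h2 : (d.sum fun _ e => e) = d 0 + d 1 + d 2 := by
          rw [Finsupp.sum_fintype _ _ (fun i => rfl), Fin.sum_univ_three]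
        omega
      constructor
      · apply hdvd
        have h1 := congrArg (coeff d) hC'
        rw [coeff_aeval_diag'] at h1
        have h2 : (∏ i, (fun _ : Fin 3 => ω) i ^ d i) = ω ^ (d 0 + d 1 + d 2) := by
          rw [Fin.prod_univ_three, ← pow_add, ← pow_add]
        rw [h2] at h1
        exact mul_right_cancel₀ hcne (by rw [h1, one_mul])
      constructor
      · apply hdvd
        have h1 := congrArg (coeff d) hA'
        rw [coeff_aeval_diag'] at h1
        have h2 : (∏ i, (![1, ω, ω ^ 2] : Fin 3 → K) i ^ d i) = ω ^ (d 1 + 2 * d 2) := by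
          rw [Fin.prod_univ_three]
          simp only [Matrix.cons_val_zero, Matrix.cons_val_one, Matrix.head_cons,
            Matrix.cons_val_two, Matrix.tail_cons, one_pow, one_mul, ← pow_mul, ← pow_add]
        rw [h2] at h1
        exact mul_right_cancel₀ hcne (by rw [h1, one_mul])
      · exact hsum
    -- the key coefficient symmetry
    have hswap : ∀ d ∈ f.support, d 2 = 0 → coeff (Finsupp.mapDomain s d) f = coeff d f := by
      intro d hd h2
      obtain ⟨hc3, ha3, hle⟩ := hconstr d hd
      have hcases : d 0 = d 1 ∨ d 1 = 0 ∨ d 0 = 0 := by omega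
      rcases hcases with he | he | he
      · have heq : Finsupp.mapDomain s d = d :=
          finsupp3_ext (by rw [hs0, he]) (by rw [hs1, he]) (by rw [hs2])
        rw [heq]
      · -- d = (d0, 0, 0) : one cyclic application
        have heq : Finsupp.mapDomain s d = Finsupp.mapDomain π d :=
          finsupp3_ext (by rw [hs0, hπ0, he, h2]) (by rw [hs1, hπ1])
            (by rw [hs2, hπ2, he, h2])
        rw [heq, hcyc]
      · -- d = (0, d1, 0) : two cyclic applications
        have heq : Finsupp.mapDomain s d = Finsupp.mapDomain π (Finsupp.mapDomain π d) :=
          finsupp3_ext (by rw [hs0, hπ0, hπ2]) (by rw [hs1, hπ1, hπ0, he, h2])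
            (by rw [hs2, hπ2, hπ1, he, h2])
        rw [heq, hcyc, hcyc]
    -- now compare the two evaluations
    set τ : (Fin 3 →₀ ℕ) → (Fin 3 →₀ ℕ) :=
      fun d => if d 2 = 0 then Finsupp.mapDomain s d else d with hτ
    have hτmem : ∀ d ∈ f.support, τ d ∈ f.support := by
      intro d hd
      by_cases h2 : d 2 = 0
      · rw [hτ]; simp only [if_pos h2]
        rw [mem_support_iff, hswap d hd h2]
        exact mem_support_iff.mp hd
      · rw [hτ]; simp only [if_neg h2]; exact hd
    have hτinv : ∀ d : Fin 3 →₀ ℕ, τ (τ d) = d := by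
      intro d
      by_cases h2 : d 2 = 0
      · rw [hτ]; simp only [if_pos h2]
        rw [if_pos (by rw [hs2]; exact h2)]
        exact finsupp3_ext (by rw [hs0, hs1]) (by rw [hs1, hs0]) (by rw [hs2, hs2])
      · rw [hτ]; simp only [if_neg h2, if_neg h2]
    rw [eval_eq', eval_eq']
    refine Finset.sum_nbij' τ τ hτmem hτmem (fun d _ => hτinv d) (fun d _ => hτinv d) ?_
    intro d hd
    by_cases h2 : d 2 = 0
    · have hτd : τ d = Finsupp.mapDomain s d := by rw [hτ]; simp only [if_pos h2]
      rw [hτd, hswap d hd h2]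
      congr 1
      rw [Fin.prod_univ_three, Fin.prod_univ_three, hs0, hs1, hs2, h2]
      simp
    · have hτd : τ d = d := by rw [hτ]; simp only [if_neg h2]
      rw [hτd, Fin.prod_univ_three, Fin.prod_univ_three]
      simp [zero_pow h2]
end

section
/- Let K have an element ξ of multiplicative order 8 and set G̃ = the binary tetrahedral group realized in GL2(K) by a ↦ diag(ξ^2, −ξ^2) and b ↦ (1/2)·[[−1−ξ^2, 1+ξ^2],[−1+ξ^2, −1+ξ^2]]. With f1 = (x1x2)^2, f2 = (x1^2+x2^2)^2, the matrix of the action of b on Span{4f1, f2} (with respect to the basis 4f1, f2) is [[0,1],[−1,−1]]; i.e., b·(4f1) = −f2 and b·f2 = 4f1 − f2. -/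
open MvPolynomial Matrix

/-- In the binary tetrahedral group `G̃ ⊂ GL2(K)` with `b` given by the matrix `B` below
(`ξ` of multiplicative order 8), the action of `b` on `Span{4f1, f2}` (where
`f1 = (x1x2)²`, `f2 = (x1²+x2²)²`) has matrix `[[0,1],[−1,−1]]` in the basis `(4f1, f2)`:
`b·(4f1) = −f2` and `b·f2 = 4f1 − f2`.  Here `(b·f)(v) = f(b⁻¹v)` and `b⁻¹ = B²`
(as `B` has order 3), so `b·f` is the substitution of `f` along the matrix `M = B²`. -/
theorem stmt9 {K : Type*} [Field K] (ξ : Kˣ) (hξ : orderOf ξ = 8) :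
    ∀ B M : Matrix (Fin 2) (Fin 2) K,
      B = (2⁻¹ : K) • !![-1 - (ξ : K) ^ 2, 1 + (ξ : K) ^ 2;
                          -1 + (ξ : K) ^ 2, -1 + (ξ : K) ^ 2] →
      M = B * B →
      aeval ![C (M 0 0) * X 0 + C (M 0 1) * X 1,
              C (M 1 0) * (X 0 : MvPolynomial (Fin 2) K) + C (M 1 1) * X 1]
          ((4 * (X 0 * X 1) ^ 2 : MvPolynomial (Fin 2) K)) = -((X 0 ^ 2 + X 1 ^ 2) ^ 2) ∧
      aeval ![C (M 0 0) * X 0 + C (M 0 1) * X 1,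
              C (M 1 0) * (X 0 : MvPolynomial (Fin 2) K) + C (M 1 1) * X 1]
          (((X 0 ^ 2 + X 1 ^ 2) ^ 2 : MvPolynomial (Fin 2) K)) = 4 * (X 0 * X 1) ^ 2 - (X 0 ^ 2 + X 1 ^ 2) ^ 2 := by
  have h1 : ξ ^ 8 = 1 := hξ ▸ pow_orderOf_eq_one ξ
  have hc8 : (ξ : K) ^ 8 = 1 := by
    have := congrArg Units.val h1; push_cast at this; exact this
  have hne : ξ ^ 4 ≠ 1 := by
    intro h
    have := orderOf_dvd_of_pow_eq_one h
    rw [hξ] at this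
    norm_num at this
  have hc4ne : (ξ : K) ^ 4 ≠ 1 := by
    intro h
    exact hne (Units.ext (by push_cast; exact h))
  have hc4 : (ξ : K) ^ 4 = -1 := by
    have h' : ((ξ : K) ^ 4 - 1) * ((ξ : K) ^ 4 + 1) = 0 := by
      have : ((ξ : K) ^ 4) ^ 2 = 1 := by rw [← pow_mul]; exact hc8
      linear_combination this
    rcases mul_eq_zero.mp h' with h | h
    · exact absurd (by linear_combination h) hc4ne
    · linear_combination h
  have h2 : (2 : K) ≠ 0 := by
    intro h
    exact hc4ne (by rw [hc4]; linear_combination -h)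
  intro B M hB hM
  have h00 : M 0 0 = ((ξ : K) ^ 2 - 1) * 2⁻¹ := by
    subst hM hB; simp [Matrix.mul_apply, Fin.sum_univ_two]; field_simp
    linear_combination (2 : K) * hc4
  have h01 : M 0 1 = -((ξ : K) ^ 2 + 1) * 2⁻¹ := by
    subst hM hB; simp [Matrix.mul_apply, Fin.sum_univ_two]; field_simp
    first | linear_combination (4 : K) * hc4 | linear_combination (-4 : K) * hc4 | ring1
  have h10 : M 1 0 = (1 - (ξ : K) ^ 2) * 2⁻¹ := by
    subst hM hB; simp [Matrix.mul_apply, Fin.sum_univ_two]; field_simp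
    ring1
  have h11 : M 1 1 = -((ξ : K) ^ 2 + 1) * 2⁻¹ := by
    subst hM hB; simp [Matrix.mul_apply, Fin.sum_univ_two]; field_simp
    linear_combination (2 : K) * hc4
  have hc4' : (C (ξ : K) : MvPolynomial (Fin 2) K) ^ 4 = -1 := by
    rw [← _root_.map_pow, hc4]; simp
  have h2u : (2 : MvPolynomial (Fin 2) K) * C (2⁻¹ : K) = 1 := by
    rw [← (_root_.map_ofNat (C : K →+* MvPolynomial (Fin 2) K) 2), ← _root_.map_mul,
      mul_inv_cancel₀ h2, _root_.map_one]
  rw [h00, h01, h10, h11]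
  constructor
  · simp only [_root_.map_ofNat, _root_.map_mul, _root_.map_pow, aeval_X, Matrix.cons_val_zero,
      Matrix.cons_val_one, Matrix.head_cons]
    have key : (C ((ξ : K) ^ 2 - 1) * C (2⁻¹ : K) * X 0 + C (-((ξ : K) ^ 2 + 1)) * C (2⁻¹ : K) * X 1) *
        (C (1 - (ξ : K) ^ 2) * C (2⁻¹ : K) * X 0 + C (-((ξ : K) ^ 2 + 1)) * C (2⁻¹ : K) * X 1) =
        C ((ξ : K) ^ 2 * 2⁻¹) * ((X 0 : MvPolynomial (Fin 2) K) ^ 2 + X 1 ^ 2) := by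
      simp only [_root_.map_mul, _root_.map_sub, _root_.map_neg, _root_.map_add, _root_.map_one, _root_.map_pow]
      linear_combination ((C (2⁻¹ : K) : MvPolynomial (Fin 2) K) * C (ξ : K) ^ 2 * (X 0 ^ 2 + X 1 ^ 2)) * h2u +
        ((C (2⁻¹ : K) : MvPolynomial (Fin 2) K) ^ 2 * (X 1 ^ 2 - X 0 ^ 2)) * hc4'
    rw [key]
    simp only [_root_.map_mul, _root_.map_pow]
    linear_combination (4 * (C (2⁻¹ : K) : MvPolynomial (Fin 2) K) ^ 2 * (X 0 ^ 2 + X 1 ^ 2) ^ 2) * hc4' +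
      (-(2 * (C (2⁻¹ : K) : MvPolynomial (Fin 2) K) + 1) * (X 0 ^ 2 + X 1 ^ 2) ^ 2) * h2u
  · simp only [_root_.map_pow, _root_.map_add, _root_.map_mul, aeval_X, Matrix.cons_val_zero,
      Matrix.cons_val_one, Matrix.head_cons]
    have key2 : (C ((ξ : K) ^ 2 - 1) * C (2⁻¹ : K) * X 0 + C (-((ξ : K) ^ 2 + 1)) * C (2⁻¹ : K) * X 1) ^ 2 +
        (C (1 - (ξ : K) ^ 2) * C (2⁻¹ : K) * X 0 + C (-((ξ : K) ^ 2 + 1)) * C (2⁻¹ : K) * X 1) ^ 2 =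
        C ((ξ : K) ^ 2) * ((X 1 : MvPolynomial (Fin 2) K) ^ 2 - X 0 ^ 2) := by
      simp only [_root_.map_mul, _root_.map_sub, _root_.map_neg, _root_.map_add, _root_.map_one, _root_.map_pow]
      linear_combination (2 * (C (2⁻¹ : K) : MvPolynomial (Fin 2) K) ^ 2 * (X 0 ^ 2 + X 1 ^ 2)) * hc4' +
        ((C (ξ : K) : MvPolynomial (Fin 2) K) ^ 2 * (2 * C (2⁻¹ : K) + 1) * (X 1 ^ 2 - X 0 ^ 2)) * h2u
    rw [key2]
    simp only [_root_.map_pow]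
    linear_combination (((X 1 : MvPolynomial (Fin 2) K) ^ 2 - X 0 ^ 2) ^ 2) * hc4'
end

section
/- Let C3 = ⟨b⟩ act on K[s1,s2,s3] by b·s1 = −s2, b·s2 = s1 − s2, b·s3 = s3, where char(K) ∤ 3. Then the invariant ring K[s1,s2,s3]^{C3} is generated by s1^2 − s1s2 + s2^2, s1^2s2 − s1s2^2, s1^3 − 3s1s2^2 + s2^3, and s3. -/
open MvPolynomial

section Stmt10Aux

variable {K : Type*} [Field K]

lemma three_ne (h3 : ringChar K ≠ 3) : (3 : K) ≠ 0 := by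
  intro h
  have hd : ringChar K ∣ 3 := ringChar.dvd (by exact_mod_cast h)
  rcases (Nat.prime_three).eq_one_or_self_of_dvd _ hd with h1 | h1
  · exact CharP.ringChar_ne_one h1
  · exact h3 h1

noncomputable def sig {K : Type*} [Field K] : MvPolynomial (Fin 3) K →ₐ[K] MvPolynomial (Fin 3) K :=
  aeval ![-(X 1 : MvPolynomial (Fin 3) K), X 0 - X 1, X 2]

lemma sig_X0 : sig (X 0 : MvPolynomial (Fin 3) K) = -X 1 := by simp [sig]
lemma sig_X1 : sig (X 1 : MvPolynomial (Fin 3) K) = X 0 - X 1 := by simp [sig]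
lemma sig_X2 : sig (X 2 : MvPolynomial (Fin 3) K) = X 2 := by simp [sig]
lemma sig_C (a : K) : sig (C a : MvPolynomial (Fin 3) K) = C a := by
  simp [sig, algebraMap_eq]

noncomputable def pp : MvPolynomial (Fin 3) K := X 0 ^ 2 - X 0 * X 1 + X 1 ^ 2
noncomputable def qq : MvPolynomial (Fin 3) K := X 0 ^ 2 * X 1 - X 0 * X 1 ^ 2
noncomputable def rr : MvPolynomial (Fin 3) K := X 0 ^ 3 - 3 * X 0 * X 1 ^ 2 + X 1 ^ 3

lemma sig_pp : sig (pp : MvPolynomial (Fin 3) K) = pp := by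
  simp only [pp, map_add, map_sub, map_mul, map_pow, sig_X0, sig_X1]; ring
lemma sig_qq : sig (qq : MvPolynomial (Fin 3) K) = qq := by
  simp only [qq, map_add, map_sub, map_mul, map_pow, sig_X0, sig_X1]; ring
lemma sig_rr : sig (rr : MvPolynomial (Fin 3) K) = rr := by
  simp only [rr, map_add, map_sub, map_mul, map_pow, map_ofNat, sig_X0, sig_X1]; ring

noncomputable def Av (f : MvPolynomial (Fin 3) K) : MvPolynomial (Fin 3) K :=
  C (3⁻¹ : K) * (f + sig f + sig (sig f))

lemma Av_fixed (h3 : (3:K) ≠ 0) {f : MvPolynomial (Fin 3) K} (hf : sig f = f) : Av f = f := by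
  rw [Av, hf, hf]
  have : (f + f + f) = C (3 : K) * f := by
    have : (C (3:K) : MvPolynomial (Fin 3) K) = 3 := by simp [map_ofNat]
    rw [this]; ring
  rw [this, ← mul_assoc, ← C_mul, inv_mul_cancel₀ h3, C_1, one_mul]

lemma Av_add (f g : MvPolynomial (Fin 3) K) : Av (f + g) = Av f + Av g := by
  simp only [Av, map_add]; ring

lemma Av_sub (f g : MvPolynomial (Fin 3) K) : Av (f - g) = Av f - Av g := by
  simp only [Av, map_sub]; ring

lemma Av_mul_fixed {g : MvPolynomial (Fin 3) K} (hg : sig g = g) (f : MvPolynomial (Fin 3) K) :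
    Av (g * f) = g * Av f := by
  simp only [Av, map_mul, hg]; ring

lemma Av_C_mul (a : K) (f : MvPolynomial (Fin 3) K) : Av (C a * f) = C a * Av f :=
  Av_mul_fixed (sig_C a) f

lemma AvXY (h3 : (3:K) ≠ 0) :
    ∀ n a b : ℕ, a + b ≤ n →
      Av ((X 0 : MvPolynomial (Fin 3) K) ^ a * X 1 ^ b) ∈
        Algebra.adjoin K ({pp, qq, rr, X 2} : Set (MvPolynomial (Fin 3) K)) := by
  set A := Algebra.adjoin K ({pp, qq, rr, X 2} : Set (MvPolynomial (Fin 3) K)) with hA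
  have hpA : (pp : MvPolynomial (Fin 3) K) ∈ A := Algebra.subset_adjoin (by simp)
  have hqA : (qq : MvPolynomial (Fin 3) K) ∈ A := Algebra.subset_adjoin (by simp)
  have hrA : (rr : MvPolynomial (Fin 3) K) ∈ A := Algebra.subset_adjoin (by simp)
  have hCA : ∀ c : K, (C c : MvPolynomial (Fin 3) K) ∈ A := by
    intro c; rw [show (C c : MvPolynomial (Fin 3) K) = algebraMap K _ c from rfl]
    exact A.algebraMap_mem c
  intro n
  induction n with
  | zero =>
    intro a b hab
    obtain ⟨rfl, rfl⟩ : a = 0 ∧ b = 0 := by omega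
    simp only [pow_zero, mul_one]
    rw [Av_fixed h3 (map_one sig)]
    exact one_mem A
  | succ n IH =>
    intro a b hab
    by_cases hle : a + b ≤ n
    · exact IH a b hle
    have hab' : a + b = n + 1 := by omega
    rcases Nat.lt_or_ge a 3 with ha | ha
    · rcases Nat.lt_or_ge b 3 with hb | hb
      · -- small cases: a < 3, b < 3
        interval_cases a <;> interval_cases b
        · simp only [pow_zero, mul_one]
          rw [Av_fixed h3 (map_one sig)]; exact one_mem A
        · rw [show Av ((X 0 : MvPolynomial (Fin 3) K) ^ 0 * X 1 ^ 1) = 0 from by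
            simp only [Av, map_mul, map_pow, map_neg, map_sub, sig_X0, sig_X1]; ring]
          exact zero_mem A
        · rw [show Av ((X 0 : MvPolynomial (Fin 3) K) ^ 0 * X 1 ^ 2)
              = C (3⁻¹ : K) * (pp + pp) from by
            simp only [Av, pp, map_mul, map_pow, map_neg, map_sub, sig_X0, sig_X1]; ring]
          exact mul_mem (hCA _) (add_mem hpA hpA)
        · rw [show Av ((X 0 : MvPolynomial (Fin 3) K) ^ 1 * X 1 ^ 0) = 0 from by
            simp only [Av, map_mul, map_pow, map_neg, map_sub, sig_X0, sig_X1]; ring]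
          exact zero_mem A
        · rw [show Av ((X 0 : MvPolynomial (Fin 3) K) ^ 1 * X 1 ^ 1)
              = C (3⁻¹ : K) * pp from by
            simp only [Av, pp, map_mul, map_pow, map_neg, map_sub, sig_X0, sig_X1]; ring]
          exact mul_mem (hCA _) hpA
        · rw [show Av ((X 0 : MvPolynomial (Fin 3) K) ^ 1 * X 1 ^ 2)
              = C (3⁻¹ : K) * (0 - rr) from by
            simp only [Av, rr, map_mul, map_pow, map_neg, map_sub, map_ofNat,
              sig_X0, sig_X1]; ring]
          exact mul_mem (hCA _) (sub_mem (zero_mem A) hrA)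
        · rw [show Av ((X 0 : MvPolynomial (Fin 3) K) ^ 2 * X 1 ^ 0)
              = C (3⁻¹ : K) * (pp + pp) from by
            simp only [Av, pp, map_mul, map_pow, map_neg, map_sub, sig_X0, sig_X1]; ring]
          exact mul_mem (hCA _) (add_mem hpA hpA)
        · rw [show Av ((X 0 : MvPolynomial (Fin 3) K) ^ 2 * X 1 ^ 1)
              = C (3⁻¹ : K) * (qq + qq + qq - rr) from by
            simp only [Av, qq, rr, map_mul, map_pow, map_neg, map_sub, map_ofNat,
              sig_X0, sig_X1]; ring]
          exact mul_mem (hCA _) (sub_mem (add_mem (add_mem hqA hqA) hqA) hrA)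
        · rw [show Av ((X 0 : MvPolynomial (Fin 3) K) ^ 2 * X 1 ^ 2)
              = C (3⁻¹ : K) * pp ^ 2 from by
            simp only [Av, pp, map_mul, map_pow, map_neg, map_sub, sig_X0, sig_X1]; ring]
          exact mul_mem (hCA _) (pow_mem hpA 2)
      · -- b ≥ 3
        obtain ⟨b', rfl⟩ : ∃ b', b = 3 + b' := ⟨b - 3, by omega⟩
        rw [show (X 0 : MvPolynomial (Fin 3) K) ^ a * X 1 ^ (3 + b')
            = pp * (X 0 ^ a * X 1 ^ (b' + 1)) - qq * (X 0 ^ a * X 1 ^ b') from by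
          simp only [pp, qq]; ring]
        rw [Av_sub, Av_mul_fixed sig_pp, Av_mul_fixed sig_qq]
        exact sub_mem (mul_mem hpA (IH a (b' + 1) (by omega)))
          (mul_mem hqA (IH a b' (by omega)))
    · -- a ≥ 3
      obtain ⟨a', rfl⟩ : ∃ a', a = 3 + a' := ⟨a - 3, by omega⟩
      rw [show (X 0 : MvPolynomial (Fin 3) K) ^ (3 + a') * X 1 ^ b
          = pp * (X 0 ^ (a' + 1) * X 1 ^ b) + qq * (X 0 ^ a' * X 1 ^ b) from by
        simp only [pp, qq]; ring]
      rw [Av_add, Av_mul_fixed sig_pp, Av_mul_fixed sig_qq]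
      exact add_mem (mul_mem hpA (IH (a' + 1) b (by omega)))
        (mul_mem hqA (IH a' b (by omega)))

lemma Av_mem (h3 : (3:K) ≠ 0) (f : MvPolynomial (Fin 3) K) :
    Av f ∈ Algebra.adjoin K ({pp, qq, rr, X 2} : Set (MvPolynomial (Fin 3) K)) := by
  set A := Algebra.adjoin K ({pp, qq, rr, X 2} : Set (MvPolynomial (Fin 3) K)) with hA
  have hX2A : (X 2 : MvPolynomial (Fin 3) K) ∈ A := Algebra.subset_adjoin (by simp)
  have hCA : ∀ c : K, (C c : MvPolynomial (Fin 3) K) ∈ A := by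
    intro c; rw [show (C c : MvPolynomial (Fin 3) K) = algebraMap K _ c from rfl]
    exact A.algebraMap_mem c
  induction f using MvPolynomial.induction_on' with
  | monomial u a =>
    have hm : (monomial u a : MvPolynomial (Fin 3) K)
        = (C a * X 2 ^ u 2) * (X 0 ^ u 0 * X 1 ^ u 1) := by
      rw [monomial_eq, Finsupp.prod_fintype _ _ (fun i => pow_zero _), Fin.prod_univ_three]
      ring
    have hfix : sig ((C a : MvPolynomial (Fin 3) K) * X 2 ^ u 2) = C a * X 2 ^ u 2 := by
      rw [map_mul, map_pow, sig_C, sig_X2]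
    rw [hm, Av_mul_fixed hfix]
    exact mul_mem (mul_mem (hCA a) (pow_mem hX2A _)) (AvXY h3 (u 0 + u 1) (u 0) (u 1) le_rfl)
  | add p q hp hq =>
    rw [Av_add]; exact add_mem hp hq

end Stmt10Aux

/-- For the `C3`-action on `K[s1,s2,s3]` (variables `s1 = X 0, s2 = X 1, s3 = X 2`) given by
`b·s1 = −s2, b·s2 = s1 − s2, b·s3 = s3` (`char K ≠ 3`), the invariant ring is generated by
`s1² − s1s2 + s2²`, `s1²s2 − s1s2²`, `s1³ − 3s1s2² + s2³` and `s3`. -/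
theorem stmt10 {K : Type*} [Field K] (h3 : ringChar K ≠ 3) :
    ∀ f : MvPolynomial (Fin 3) K,
      aeval ![-(X 1 : MvPolynomial (Fin 3) K), X 0 - X 1, X 2] f = f ↔
      f ∈ Algebra.adjoin K
        ({X 0 ^ 2 - X 0 * X 1 + X 1 ^ 2,
          X 0 ^ 2 * X 1 - X 0 * X 1 ^ 2,
          X 0 ^ 3 - 3 * X 0 * X 1 ^ 2 + X 1 ^ 3,
          X 2} : Set (MvPolynomial (Fin 3) K)) := by
  have h3' : (3 : K) ≠ 0 := three_ne h3
  intro f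
  show sig f = f ↔ f ∈ Algebra.adjoin K ({pp, qq, rr, X 2} : Set (MvPolynomial (Fin 3) K))
  constructor
  · intro hf
    have := Av_mem h3' f
    rwa [Av_fixed h3' hf] at this
  · intro hf
    induction hf using Algebra.adjoin_induction with
    | mem g hg =>
      rcases hg with rfl | rfl | rfl | rfl
      · exact sig_pp
      · exact sig_qq
      · exact sig_rr
      · exact sig_X2
    | algebraMap c => exact sig.commutes c
    | add x y _ _ hx hy => rw [map_add, hx, hy]
    | mul x y _ _ hx hy => rw [map_mul, hx, hy]
end

section
/- Let K contain an element ω of multiplicative order 9, ε = ω^3, and let G = M27 = ⟨a,b | a^9 = b^3 = 1, bab^{-1} = a^4⟩ act on W1 = K^3 via a = diag(ω, ω^4, ω^7) and b the cyclic permutation matrix. If w ∈ W1 is nonzero and has a nontrivial stabilizer in G, then the stabilizer is one of ⟨b⟩, ⟨a^3 b⟩, ⟨a^6 b⟩ (each of order 3); specifically Stab(w) = ⟨b⟩ iff w ∈ K·(1,1,1)^T, Stab(w) = ⟨a^3b⟩ iff w ∈ K·(ε^2, ε, 1)^T, and Stab(w) = ⟨a^6b⟩ iff w ∈ K·(ε,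 ε^2, 1)^T. -/
open Matrix

/-!
Since `b a = a⁴ b`, every element of `G = ⟨a, b⟩` has the form `aⁱ bʲ`. A diagonal `aⁱ` fixes a
nonzero vector only if `aⁱ = 1`, so a stabilizer contains at most one element `aⁱ bʲ` for each
`j`. If some `aⁱ bʲ ≠ 1` fixes `w ≠ 0`, then so does an element `aᵐ b` (itself, or its square),
whose cube is the scalar `ω^{12m}`; hence `ω^{3m} = 1`, `aᵐ = ε^k` is central, and `aᵐ b = ε^k b`
fixes exactly the eigenvectors `c (η², η, 1)` of `b`, `η = ε^k`. Conversely, on such a line the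
elements `(ε^k b)ʲ` are the only candidates, one for each `j`.
-/

lemma pow_pow_eq_one_of_pow_eq_one {M : Type*} [Monoid M] {x : M} {n : ℕ} (hx : x ^ n = 1)
    (m : ℕ) : (x ^ m) ^ n = 1 := by
  rw [pow_right_comm, hx, one_pow]

lemma exists_lt_three_pow_eq_pow_three_mul {G : Type*} [Monoid G] {ω : G} (hω : orderOf ω = 9)
    {m : ℕ} (h : (ω ^ m) ^ 3 = 1) : ∃ k < 3, ω ^ m = ω ^ (3 * k) := by
  rw [← pow_mul, ← orderOf_dvd_iff_pow_eq_one, hω] at h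
  refine ⟨m % 9 / 3, by omega, ?_⟩
  rw [← pow_mod_orderOf, hω, show 3 * (m % 9 / 3) = m % 9 by omega]

namespace M27

variable {R : Type*} [CommRing R]

def fixingSubmonoid {n : Type*} [Fintype n] [DecidableEq n] (w : n → R) :
    Submonoid (Matrix n n R) where
  carrier := {M | M *ᵥ w = w}
  mul_mem' {M N} (hM : M *ᵥ w = w) (hN : N *ᵥ w = w) := by
    rw [Set.mem_ofPred_eq, ← mulVec_mulVec, hN, hM]
  one_mem' := one_mulVec w

@[simp]
lemma mem_fixingSubmonoid {n : Type*} [Fintype n] [DecidableEq n] {w : n → R}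
    {M : Matrix n n R} : M ∈ fixingSubmonoid w ↔ M *ᵥ w = w :=
  Iff.rfl

def matA (x : R) : Matrix (Fin 3) (Fin 3) R := diagonal ![x, x ^ 4, x ^ 7]

def matB : Matrix (Fin 3) (Fin 3) R := !![0, 1, 0; 0, 0, 1; 1, 0, 0]

lemma matA_one : matA (1 : R) = 1 := by
  rw [matA, ← diagonal_one]
  congr 1
  ext i; fin_cases i <;> simp

lemma matA_mul_matA (x y : R) : matA x * matA y = matA (x * y) := by
  rw [matA, matA, matA, diagonal_mul_diagonal]
  congr 1
  ext i; fin_cases i <;> simp [mul_pow]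

lemma matA_pow (x : R) (n : ℕ) : matA x ^ n = matA (x ^ n) := by
  induction n with
  | zero => simp [matA_one]
  | succ n ih => rw [pow_succ, ih, matA_mul_matA, pow_succ]

lemma matA_eq_smul_one {η : R} (hη : η ^ 3 = 1) : matA η = η • 1 := by
  have h4 : η ^ 4 = η := by rw [pow_succ, hη, one_mul]
  have h7 : η ^ 7 = η := by rw [pow_succ, show 6 = 3 * 2 from rfl, pow_mul, hη, one_pow, one_mul]
  rw [matA, h4, h7, smul_one_eq_diagonal]
  congr 1
  ext i; fin_cases i <;> rfl

lemma matA_mulVec (x : R) (v : Fin 3 → R) :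
    matA x *ᵥ v = ![x * v 0, x ^ 4 * v 1, x ^ 7 * v 2] := by
  ext i; fin_cases i <;> simp [matA, mulVec_diagonal]

lemma matB_mulVec (v : Fin 3 → R) : matB *ᵥ v = ![v 1, v 2, v 0] := by
  ext i; fin_cases i <;> simp [matB, mulVec, dotProduct, Fin.sum_univ_three]

lemma matB_pow_three : (matB : Matrix (Fin 3) (Fin 3) R) ^ 3 = 1 := by
  ext i j; fin_cases i <;> fin_cases j <;> simp [matB, pow_succ, mul_apply, Fin.sum_univ_three]

lemma matB_pow_mod_three (j : ℕ) : (matB : Matrix (Fin 3) (Fin 3) R) ^ j = matB ^ (j % 3) := by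
  conv_lhs => rw [← Nat.mod_add_div j 3, pow_add, pow_mul, matB_pow_three, one_pow, mul_one]

lemma matB_mul_matA {x : R} (hx : x ^ 9 = 1) : matB * matA x = matA (x ^ 4) * matB := by
  have h16 : x ^ 16 = x ^ 7 := by rw [show 16 = 9 + 7 from rfl, pow_add, hx, one_mul]
  have h28 : x ^ 28 = x := by
    rw [show 28 = 9 * 3 + 1 from rfl, pow_add, pow_mul, hx, one_pow, one_mul, pow_one]
  ext i j; fin_cases i <;> fin_cases j <;>
    simp [matA, matB, mul_apply, Fin.sum_univ_three, ← pow_mul, h16, h28]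

lemma matB_pow_mul_matA {x : R} (hx : x ^ 9 = 1) (j : ℕ) :
    matB ^ j * matA x = matA (x ^ 4 ^ j) * matB ^ j := by
  induction j generalizing x with
  | zero => simp
  | succ j ih =>
    rw [pow_succ, mul_assoc, matB_mul_matA hx, ← mul_assoc,
      ih (pow_pow_eq_one_of_pow_eq_one hx 4), mul_assoc, ← pow_mul,
      ← pow_succ', ← pow_succ]

lemma matA_mul_matB_pow_mul {y : R} (hy : y ^ 9 = 1) (x : R) (j l : ℕ) :
    matA x * matB ^ j * (matA y * matB ^ l) = matA (x * y ^ 4 ^ j) * matB ^ (j + l) := by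
  rw [mul_assoc, ← mul_assoc (matB ^ j), matB_pow_mul_matA hy, mul_assoc, ← mul_assoc,
    matA_mul_matA, ← pow_add]

lemma mem_closure_matA_matB_iff {ω : R} (hω : ω ^ 9 = 1) {M : Matrix (Fin 3) (Fin 3) R} :
    M ∈ Submonoid.closure {matA ω, matB} ↔ ∃ i j : ℕ, M = matA (ω ^ i) * matB ^ j := by
  constructor
  · intro hM
    induction hM using Submonoid.closure_induction with
    | mem M hM =>
      rcases hM with rfl | rfl
      · exact ⟨1, 0, by simp⟩
      · exact ⟨0, 1, by simp [matA_one]⟩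
    | one => exact ⟨0, 0, by simp [matA_one]⟩
    | mul M N _ _ hM hN =>
      obtain ⟨i, j, rfl⟩ := hM
      obtain ⟨k, l, rfl⟩ := hN
      refine ⟨i + k * 4 ^ j, j + l, ?_⟩
      rw [matA_mul_matB_pow_mul (pow_pow_eq_one_of_pow_eq_one hω k), ← pow_mul, ← pow_add]
  · rintro ⟨i, j, rfl⟩
    rw [← matA_pow]
    exact mul_mem (pow_mem (Submonoid.subset_closure (by simp)) i)
      (pow_mem (Submonoid.subset_closure (by simp)) j)

lemma matA_mul_matB_pow_three (x : R) : (matA x * matB) ^ 3 = x ^ 12 • 1 := by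
  ext i j; fin_cases i <;> fin_cases j <;>
    simp [matA, matB, pow_succ, mul_apply, Fin.sum_univ_three]
  all_goals ring

lemma sq_matA_mul_matB_sq {x : R} (hx : x ^ 9 = 1) :
    (matA x * matB ^ 2) ^ 2 = matA (x ^ 17) * matB := by
  rw [sq, matA_mul_matB_pow_mul hx, show 2 + 2 = 3 + 1 from rfl, pow_add, matB_pow_three,
    one_mul, pow_one]
  congr 2
  ring

lemma matB_pow_mulVec_ne_zero (j : ℕ) {w : Fin 3 → R} (hw : w ≠ 0) : matB ^ j *ᵥ w ≠ 0 := by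
  intro h
  have hinv : (matB : Matrix (Fin 3) (Fin 3) R) ^ (2 * j) * matB ^ j = 1 := by
    rw [← pow_add, show 2 * j + j = 3 * j by ring, pow_mul, matB_pow_three, one_pow]
  apply hw
  rw [← one_mulVec w, ← hinv, ← mulVec_mulVec, h, mulVec_zero]

lemma smul_matB_mulVec_eq_self_iff {η : R} (hη : η ^ 3 = 1) {w : Fin 3 → R} :
    (η • matB) *ᵥ w = w ↔ ∃ c : R, w = c • ![η ^ 2, η, 1] := by
  rw [smul_mulVec, matB_mulVec]
  constructor
  · intro h
    have h0 : η * w 1 = w 0 := congrFun h 0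
    have h1 : η * w 2 = w 1 := congrFun h 1
    refine ⟨w 2, ?_⟩
    ext i; fin_cases i <;> simp [← h0, ← h1] <;> ring
  · rintro ⟨c, rfl⟩
    ext i; fin_cases i <;> simp
    · ring
    · ring
    · linear_combination c * hη

def stabilizer (ω : R) (w : Fin 3 → R) : Submonoid (Matrix (Fin 3) (Fin 3) R) :=
  Submonoid.closure {matA ω, matB} ⊓ fixingSubmonoid w

variable [IsDomain R] {ω : R} {w : Fin 3 → R}

lemma eq_of_matA_mulVec_eq {x y : R} (hx : x ^ 9 = 1) (hy : y ^ 9 = 1) {u : Fin 3 → R}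
    (hu : u ≠ 0) (h : matA x *ᵥ u = matA y *ᵥ u) : x = y := by
  have root4 : ∀ z : R, z ^ 9 = 1 → z = (z ^ 4) ^ 7 := fun z hz => by
    rw [← pow_mul, show 4 * 7 = 9 * 3 + 1 from rfl, pow_add, pow_mul, hz]; simp
  have root7 : ∀ z : R, z ^ 9 = 1 → z = (z ^ 7) ^ 4 := fun z hz => by
    rw [← pow_mul, show 7 * 4 = 9 * 3 + 1 from rfl, pow_add, pow_mul, hz]; simp
  rw [matA_mulVec, matA_mulVec] at h
  obtain ⟨i, hi⟩ := Function.ne_iff.mp hu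
  fin_cases i
  · exact mul_right_cancel₀ hi (congrFun h 0)
  · rw [root4 x hx, root4 y hy, mul_right_cancel₀ hi (congrFun h 1)]
  · rw [root7 x hx, root7 y hy, mul_right_cancel₀ hi (congrFun h 2)]

lemma pow_three_eq_one_of_matA_mul_matB_mulVec_eq_self {x : R} (hx : x ^ 9 = 1) (hw : w ≠ 0)
    (h : (matA x * matB) *ᵥ w = w) : x ^ 3 = 1 := by
  have hcube := (fixingSubmonoid w).pow_mem h 3
  rw [mem_fixingSubmonoid, matA_mul_matB_pow_three, smul_mulVec, one_mulVec] at hcube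
  have h12 : x ^ 12 = 1 := smul_left_injective R hw (by simpa using hcube)
  rwa [show 12 = 9 + 3 from rfl, pow_add, hx, one_mul] at h12

theorem stabilizer_eq_closure_iff (hω : ω ^ 9 = 1) (hw : w ≠ 0) (k : ℕ) :
    stabilizer ω w = Submonoid.closure {matA ω ^ (3 * k) * matB} ↔
      ∃ c : R, w = c • ![ω ^ (6 * k), ω ^ (3 * k), 1] := by
  have hη : (ω ^ (3 * k)) ^ 3 = 1 := by
    rw [← pow_mul, show 3 * k * 3 = 9 * k by ring, pow_mul, hω, one_pow]
  set η := ω ^ (3 * k)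
  have hg : matA ω ^ (3 * k) * matB = η • matB := by
    rw [matA_pow, matA_eq_smul_one hη, smul_one_mul]
  have hv : ![ω ^ (6 * k), ω ^ (3 * k), 1] = ![η ^ 2, η, 1] := by
    rw [← pow_mul, show 3 * k * 2 = 6 * k by ring]
  rw [hg, hv, ← smul_matB_mulVec_eq_self_iff hη]
  constructor
  · intro h
    exact (h ▸ Submonoid.subset_closure (Set.mem_singleton _) : η • matB ∈ stabilizer ω w).2
  · intro hfix
    apply le_antisymm
    · intro M hM
      obtain ⟨hM, hMw⟩ := Submonoid.mem_inf.mp hM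
      obtain ⟨i, j, rfl⟩ := (mem_closure_matA_matB_iff hω).mp hM
      have hgj : matA (η ^ j) * matB ^ j = (η • matB) ^ j := by
        rw [smul_pow, matA_eq_smul_one (pow_pow_eq_one_of_pow_eq_one hη j), smul_one_mul]
      have hj := (fixingSubmonoid w).pow_mem hfix j
      rw [← hgj, mem_fixingSubmonoid, ← mulVec_mulVec] at hj
      rw [mem_fixingSubmonoid, ← mulVec_mulVec] at hMw
      have hηj : (η ^ j) ^ 9 = 1 :=
        pow_pow_eq_one_of_pow_eq_one (pow_pow_eq_one_of_pow_eq_one hω _) j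
      rw [eq_of_matA_mulVec_eq (pow_pow_eq_one_of_pow_eq_one hω i) hηj
        (matB_pow_mulVec_ne_zero j hw) (hMw.trans hj.symm), hgj]
      exact pow_mem (Submonoid.subset_closure (Set.mem_singleton _)) j
    · rw [Submonoid.closure_le, Set.singleton_subset_iff]
      refine ⟨?_, hfix⟩
      rw [← hg, matA_pow]
      exact (mem_closure_matA_matB_iff hω).mpr ⟨3 * k, 1, by rw [pow_one]⟩

theorem exists_eq_smul_of_mem_stabilizer (hω : orderOf ω = 9) (hw : w ≠ 0)
    {M : Matrix (Fin 3) (Fin 3) R} (hM : M ∈ stabilizer ω w) (hM1 : M ≠ 1) :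
    ∃ k < 3, ∃ c : R, w = c • ![ω ^ (6 * k), ω ^ (3 * k), 1] := by
  have hω9 : ω ^ 9 = 1 := hω ▸ pow_orderOf_eq_one ω
  obtain ⟨hM, hMw⟩ := Submonoid.mem_inf.mp hM
  rw [mem_fixingSubmonoid] at hMw
  obtain ⟨i, j, rfl⟩ := (mem_closure_matA_matB_iff hω9).mp hM
  rw [matB_pow_mod_three] at hMw hM1
  obtain ⟨m, hm⟩ : ∃ m, (matA (ω ^ m) * matB) *ᵥ w = w := by
    have hj : j % 3 < 3 := Nat.mod_lt _ (by norm_num)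
    interval_cases j % 3
    · rw [pow_zero, mul_one] at hMw hM1
      refine absurd ?_ hM1
      rw [eq_of_matA_mulVec_eq (pow_pow_eq_one_of_pow_eq_one hω9 i) (one_pow 9) hw
        (by rw [hMw, matA_one, one_mulVec]), matA_one]
    · exact ⟨i, by rwa [pow_one] at hMw⟩
    · refine ⟨i * 17, ?_⟩
      have hsq := (fixingSubmonoid w).pow_mem hMw 2
      rwa [sq_matA_mul_matB_sq (pow_pow_eq_one_of_pow_eq_one hω9 i), ← pow_mul] at hsq
  have hm3 := pow_three_eq_one_of_matA_mul_matB_mulVec_eq_self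
    (pow_pow_eq_one_of_pow_eq_one hω9 m) hw hm
  obtain ⟨k, hk, hmk⟩ := exists_lt_three_pow_eq_pow_three_mul hω hm3
  rw [hmk] at hm3 hm
  rw [matA_eq_smul_one hm3, smul_one_mul, smul_matB_mulVec_eq_self_iff hm3] at hm
  obtain ⟨c, hc⟩ := hm
  exact ⟨k, hk, c, by rw [hc, ← pow_mul, show 3 * k * 2 = 6 * k by ring]⟩

end M27

open M27

/-- Stabilizers for the `M27 = ⟨a,b | a⁹ = b³ = 1, bab⁻¹ = a⁴⟩`-action on `W1 = K³` via
`a = diag(ω, ω⁴, ω⁷)` (`ω` of multiplicative order 9, `ε = ω³`) and `b` the cyclic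
permutation matrix.  The group generated by `Ma, Mb` is finite, so it coincides with the
`Submonoid.closure`; if a nonzero `w` has nontrivial stabilizer then the stabilizer is one
of `⟨b⟩, ⟨a³b⟩, ⟨a⁶b⟩`, with `Stab(w) = ⟨b⟩ ↔ w ∈ K·(1,1,1)`,
`Stab(w) = ⟨a³b⟩ ↔ w ∈ K·(ε²,ε,1)`, `Stab(w) = ⟨a⁶b⟩ ↔ w ∈ K·(ε,ε²,1)`. -/
theorem stmt17 {K : Type*} [Field K] (ω : Kˣ) (hω : orderOf ω = 9)
    (w : Fin 3 → K) (hw : w ≠ 0) :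
    ∀ Ma Mb : Matrix (Fin 3) (Fin 3) K,
      Ma = Matrix.diagonal ![(ω : K), (ω : K) ^ 4, (ω : K) ^ 7] →
      Mb = !![0,1,0;0,0,1;1,0,0] →
      ((∃ M ∈ Submonoid.closure {Ma, Mb}, M.mulVec w = w ∧ M ≠ 1) →
        ({M | M ∈ Submonoid.closure {Ma, Mb} ∧ M.mulVec w = w}
            = (Submonoid.closure {Mb} : Set (Matrix (Fin 3) (Fin 3) K)) ∨
         {M | M ∈ Submonoid.closure {Ma, Mb} ∧ M.mulVec w = w}
            = (Submonoid.closure {Ma ^ 3 * Mb} : Set (Matrix (Fin 3) (Fin 3) K)) ∨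
         {M | M ∈ Submonoid.closure {Ma, Mb} ∧ M.mulVec w = w}
            = (Submonoid.closure {Ma ^ 6 * Mb} : Set (Matrix (Fin 3) (Fin 3) K)))) ∧
      ({M | M ∈ Submonoid.closure {Ma, Mb} ∧ M.mulVec w = w}
          = (Submonoid.closure {Mb} : Set (Matrix (Fin 3) (Fin 3) K)) ↔
        ∃ c : K, w = c • ![1, 1, 1]) ∧
      ({M | M ∈ Submonoid.closure {Ma, Mb} ∧ M.mulVec w = w}
          = (Submonoid.closure {Ma ^ 3 * Mb} : Set (Matrix (Fin 3) (Fin 3) K)) ↔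
        ∃ c : K, w = c • ![(ω : K) ^ 6, (ω : K) ^ 3, 1]) ∧
      ({M | M ∈ Submonoid.closure {Ma, Mb} ∧ M.mulVec w = w}
          = (Submonoid.closure {Ma ^ 6 * Mb} : Set (Matrix (Fin 3) (Fin 3) K)) ↔
        ∃ c : K, w = c • ![(ω : K) ^ 3, (ω : K) ^ 6, 1]) := by
  intro Ma Mb hMa hMb
  obtain rfl : Ma = matA (ω : K) := hMa
  obtain rfl : Mb = matB := hMb
  have hωK : orderOf (ω : K) = 9 := by rwa [orderOf_units]
  have hω9 : (ω : K) ^ 9 = 1 := hωK ▸ pow_orderOf_eq_one _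
  have hstab : {M | M ∈ Submonoid.closure {matA (ω : K), matB} ∧ M *ᵥ w = w} =
      (stabilizer (ω : K) w : Set (Matrix (Fin 3) (Fin 3) K)) := rfl
  have h12 : (ω : K) ^ 12 = ω ^ 3 := by rw [show 12 = 9 + 3 from rfl, pow_add, hω9, one_mul]
  have key := stabilizer_eq_closure_iff hω9 hw
  simp only [hstab, SetLike.coe_set_eq]
  refine ⟨?_, by simpa using key 0, by simpa using key 1, by simpa [h12] using key 2⟩
  rintro ⟨M, hM, hMw, hM1⟩
  obtain ⟨k, hk, hline⟩ :=
    exists_eq_smul_of_mem_stabilizer hωK hw (Submonoid.mem_inf.mpr ⟨hM, hMw⟩) hM1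
  interval_cases k
  · exact Or.inl (by simpa using (key 0).mpr hline)
  · exact Or.inr (Or.inl (by simpa using (key 1).mpr hline))
  · exact Or.inr (Or.inr (by simpa using (key 2).mpr hline))
end

section
/- Let K contain an element ω of multiplicative order 9 and let M27 act on W1 = K^3 via a = diag(ω, ω^4, ω^7), b cyclic permutation of coordinates, and on a one-dimensional space U with coordinate t via a·t = t, b·t = ε t where ε = ω^3. Set v = ((1,0,0)^T, ε) and v' = ((1,0,0)^T, ε^2) in W1 ⊕ U. Then every M27-invariant polynomial of degree at most 9 on W1 ⊕ U takes equal values at v and v', but the degree-10 invariant (x1^9 + ε^2 x2^9 + ε x3^9)·t separates them. Hence β_sep(M27, W1 ⊕ U) ≥ 10. -/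
open MvPolynomial

def cyc : Equiv.Perm (Fin 4) where
  toFun := ![1, 2, 0, 3]
  invFun := ![2, 0, 1, 3]
  left_inv := by decide
  right_inv := by decide

lemma coeffA {K : Type*} [Field K] (w : K) (m : Fin 4 →₀ ℕ) (f : MvPolynomial (Fin 4) K) :
    coeff m (aeval ![C w * X 0, C (w^4) * X 1, C (w^7) * X 2, (X 3 : MvPolynomial (Fin 4) K)] f)
      = w ^ (m 0 + 4 * m 1 + 7 * m 2) * coeff m f := by
  induction f using MvPolynomial.induction_on' with
  | add p q hp hq => simp only [map_add, coeff_add, hp, hq]; ring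
  | monomial d r =>
    have key : aeval ![C w * X 0, C (w^4) * X 1, C (w^7) * X 2, (X 3 : MvPolynomial (Fin 4) K)]
        (monomial d r) = C (w ^ (d 0 + 4 * d 1 + 7 * d 2)) * monomial d r := by
      rw [aeval_monomial, Finsupp.prod_pow, monomial_eq, Finsupp.prod_pow]
      rw [Fin.prod_univ_four, Fin.prod_univ_four]
      simp only [Matrix.cons_val_zero, Matrix.cons_val_one, Matrix.head_cons,
        Matrix.cons_val_two, Matrix.tail_cons, Matrix.cons_val_three, algebraMap_eq]
      rw [mul_pow, mul_pow, mul_pow, ← C_pow, ← C_pow, ← C_pow, ← pow_mul, ← pow_mul,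
        pow_add, pow_add, C_mul, C_mul]
      ring
    rw [key, coeff_C_mul, coeff_monomial]
    by_cases h : d = m
    · subst h; simp
    · simp [h]

lemma coeffB {K : Type*} [Field K] (e : K) (m : Fin 4 →₀ ℕ) (f : MvPolynomial (Fin 4) K) :
    coeff m (aeval ![(X 1 : MvPolynomial (Fin 4) K), X 2, X 0, C (e ^ 2) * X 3] f)
      = (e ^ 2) ^ (m 3) * coeff (Finsupp.equivMapDomain cyc.symm m) f := by
  induction f using MvPolynomial.induction_on' with
  | add p q hp hq => simp only [map_add, coeff_add, hp, hq]; ring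
  | monomial d r =>
    have key : aeval ![(X 1 : MvPolynomial (Fin 4) K), X 2, X 0, C (e ^ 2) * X 3]
        (monomial d r)
        = C ((e ^ 2) ^ d 3) * monomial (Finsupp.equivMapDomain cyc d) r := by
      rw [aeval_monomial, Finsupp.prod_pow, monomial_eq, Finsupp.prod_pow]
      rw [Fin.prod_univ_four, Fin.prod_univ_four]
      have h0 : (Finsupp.equivMapDomain cyc d) 0 = d 2 := by
        rw [Finsupp.equivMapDomain_apply]; rfl
      have h1 : (Finsupp.equivMapDomain cyc d) 1 = d 0 := by
        rw [Finsupp.equivMapDomain_apply]; rfl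
      have h2 : (Finsupp.equivMapDomain cyc d) 2 = d 1 := by
        rw [Finsupp.equivMapDomain_apply]; rfl
      have h3 : (Finsupp.equivMapDomain cyc d) 3 = d 3 := by
        rw [Finsupp.equivMapDomain_apply]; rfl
      simp only [Matrix.cons_val_zero, Matrix.cons_val_one, Matrix.head_cons,
        Matrix.cons_val_two, Matrix.tail_cons, Matrix.cons_val_three, algebraMap_eq,
        h0, h1, h2, h3]
      rw [mul_pow, ← C_pow]
      ring
    rw [key, coeff_C_mul, coeff_monomial]
    by_cases h : Finsupp.equivMapDomain cyc d = m
    · have hd : d = Finsupp.equivMapDomain cyc.symm m := by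
        rw [← h]; ext i; simp [Finsupp.equivMapDomain_apply]
      have h3 : d 3 = m 3 := by rw [← h, Finsupp.equivMapDomain_apply]; rfl
      rw [if_pos h, ← hd, h3, coeff_monomial, if_pos rfl]
    · rw [if_neg h, coeff_monomial, if_neg, mul_zero, mul_zero]
      intro hd
      apply h
      rw [hd]; ext i; simp [Finsupp.equivMapDomain_apply]

/-- `β_sep(M27, W1 ⊕ U) ≥ 10`: with `M27` acting on `K[x1,x2,x3,t]` (variables
`X 0, X 1, X 2, X 3`) via `a = diag(ω, ω⁴, ω⁷)` on `W1`, `b` the cyclic permutation, and on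
`U` with weight `(1, ε²)` on evaluation points (`a·t = t`, `b·t = εt` on the coordinate
function, `ε = ω³`), every invariant of degree `≤ 9` agrees on `v = ((1,0,0), ε)` and
`v' = ((1,0,0), ε²)`, while the degree-10 invariant `(x1⁹ + ε²x2⁹ + εx3⁹)·t` separates
them.  A polynomial is invariant iff it is fixed by the substitutions of the two group
generators. -/
theorem stmt18 {K : Type*} [Field K] (ω : Kˣ) (hω : orderOf ω = 9) :
    ∀ ε : K, ε = (ω : K) ^ 3 →
    ∀ g : MvPolynomial (Fin 4) K,
      g = (X 0 ^ 9 + C (ε ^ 2) * X 1 ^ 9 + C ε * X 2 ^ 9) * X 3 →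
      (∀ f : MvPolynomial (Fin 4) K,
          aeval ![C ((ω : K)) * X 0, C ((ω : K) ^ 4) * X 1, C ((ω : K) ^ 7) * X 2,
                  (X 3 : MvPolynomial (Fin 4) K)] f = f →
          aeval ![(X 1 : MvPolynomial (Fin 4) K), X 2, X 0, C (ε ^ 2) * X 3] f = f →
          f.totalDegree ≤ 9 →
          eval ![1, 0, 0, ε] f = eval ![1, 0, 0, ε ^ 2] f) ∧
        aeval ![C ((ω : K)) * X 0, C ((ω : K) ^ 4) * X 1, C ((ω : K) ^ 7) * X 2,
                (X 3 : MvPolynomial (Fin 4) K)] g = g ∧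
        aeval ![(X 1 : MvPolynomial (Fin 4) K), X 2, X 0, C (ε ^ 2) * X 3] g = g ∧
        eval ![1, 0, 0, ε] g ≠ eval ![1, 0, 0, ε ^ 2] g := by
  intro ε hε g hg
  -- basic facts about ω and ε
  have h9u : ω ^ 9 = 1 := by rw [← hω]; exact pow_orderOf_eq_one ω
  have hω9 : (ω : K) ^ 9 = 1 := by
    have := congrArg (Units.val) h9u; push_cast at this; exact_mod_cast this
  have hdvd : ∀ n : ℕ, (ω : K) ^ n = 1 → 9 ∣ n := by
    intro n h
    have hu : ω ^ n = 1 := by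
      ext; push_cast; exact h
    rw [← hω]; exact orderOf_dvd_of_pow_eq_one hu
  have hε3 : ε ^ 3 = 1 := by
    rw [hε, ← pow_mul]; norm_num; exact hω9
  have hεne0 : ε ≠ 0 := by
    intro h; rw [h] at hε3; simp at hε3
  have hεne1 : ε ≠ 1 := by
    intro h
    have : (9 : ℕ) ∣ 3 := hdvd 3 (by rw [← hε, h])
    omega
  refine ⟨?_, ?_, ?_, ?_⟩
  · -- all invariants of degree ≤ 9 agree on v and v'
    intro f ha hb hdeg
    rw [eval_eq', eval_eq']
    apply Finset.sum_congr rfl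
    intro d hd
    rw [Fin.prod_univ_four, Fin.prod_univ_four]
    simp only [Matrix.cons_val_zero, Matrix.cons_val_one, Matrix.head_cons,
      Matrix.cons_val_two, Matrix.tail_cons, Matrix.cons_val_three, one_pow, one_mul]
    by_cases h1 : d 1 = 0
    swap
    · rw [zero_pow h1]; ring
    by_cases h2 : d 2 = 0
    swap
    · rw [zero_pow h2]; ring
    rw [h1, h2]
    simp only [pow_zero, one_mul]
    -- coeff d f ≠ 0
    have hcne : coeff d f ≠ 0 := (mem_support_iff.mp hd)
    -- a-invariance forces 9 ∣ d 0
    have hA := coeffA (ω : K) d f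
    rw [ha, h1, h2] at hA
    simp only [mul_zero, add_zero] at hA
    have hω0 : (ω : K) ^ d 0 = 1 := by
      by_contra hne
      have : ((ω : K) ^ d 0 - 1) * coeff d f = 0 := by
        rw [sub_mul, one_mul, ← hA, sub_self]
      rcases mul_eq_zero.mp this with h | h
      · exact hne (sub_eq_zero.mp h)
      · exact hcne h
    have hd0 : 9 ∣ d 0 := hdvd _ hω0
    -- degree bound
    have hsum : d 0 + d 3 ≤ 9 := by
      have h := MvPolynomial.le_totalDegree hd
      have hs : (d.sum fun _ e => e) = d 0 + d 1 + d 2 + d 3 := by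
        rw [Finsupp.sum_fintype _ _ (fun _ => rfl), Fin.sum_univ_four]
      omega
    rcases hd0 with ⟨k, hk⟩
    have hk01 : k = 0 ∨ k = 1 := by omega
    rcases hk01 with hk0 | hk0 <;> subst hk0
    · -- d 0 = 0 : use b-invariance
      have hd00 : d 0 = 0 := by omega
      have hB := coeffB ε d f
      rw [hb] at hB
      have hfix : Finsupp.equivMapDomain cyc.symm d = d := by
        ext i
        rw [Finsupp.equivMapDomain_apply, Equiv.symm_symm]
        fin_cases i
        · show d (cyc 0) = d 0; rw [show cyc 0 = 1 from rfl, h1, hd00]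
        · show d (cyc 1) = d 1; rw [show cyc 1 = 2 from rfl, h1, h2]
        · show d (cyc 2) = d 2; rw [show cyc 2 = 0 from rfl, h2, hd00]
        · rfl
      rw [hfix] at hB
      have hε2 : (ε ^ 2) ^ d 3 = 1 := by
        by_contra hne
        have : ((ε ^ 2) ^ d 3 - 1) * coeff d f = 0 := by
          rw [sub_mul, one_mul, ← hB, sub_self]
        rcases mul_eq_zero.mp this with h | h
        · exact hne (sub_eq_zero.mp h)
        · exact hcne h
      have hε1 : ε ^ d 3 = 1 := by
        have h3 : (ε ^ d 3) ^ 3 = 1 := by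
          rw [← pow_mul, mul_comm, pow_mul, hε3, one_pow]
        have h2' : (ε ^ d 3) ^ 2 = 1 := by
          rw [← pow_mul, mul_comm, pow_mul]; exact hε2
        calc ε ^ d 3 = (ε ^ d 3) ^ 2 * ε ^ d 3 := by rw [h2', one_mul]
          _ = (ε ^ d 3) ^ 3 := by ring
          _ = 1 := h3
      rw [hε1, hε2]
    · -- d 0 = 9 : then d 3 = 0
      have hd09 : d 0 = 9 := by omega
      have hd30 : d 3 = 0 := by omega
      rw [hd30, pow_zero, pow_zero]
  · -- g is a-invariant
    subst hg
    simp only [map_mul, map_add, map_pow, aeval_X, aeval_C, algebraMap_eq,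
      Matrix.cons_val_zero, Matrix.cons_val_one, Matrix.head_cons,
      Matrix.cons_val_two, Matrix.tail_cons, Matrix.cons_val_three]
    have h36 : ((ω : K) ^ 4) ^ 9 = 1 := by
      rw [← pow_mul, mul_comm, pow_mul, hω9, one_pow]
    have h63 : ((ω : K) ^ 7) ^ 9 = 1 := by
      rw [← pow_mul, mul_comm, pow_mul, hω9, one_pow]
    simp only [mul_pow, ← C_pow, hω9, h36, h63, C_1, one_mul]
  · -- g is b-invariant
    subst hg
    simp only [map_mul, map_add, map_pow, aeval_X, aeval_C, algebraMap_eq,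
      Matrix.cons_val_zero, Matrix.cons_val_one, Matrix.head_cons,
      Matrix.cons_val_two, Matrix.tail_cons, Matrix.cons_val_three]
    have hC3 : (C ε : MvPolynomial (Fin 4) K) ^ 3 = 1 := by
      rw [← C_pow, hε3, C_1]
    linear_combination (X 0 ^ 9 * X 3 + C ε * X 2 ^ 9 * X 3) * hC3
  · -- g separates v and v'
    subst hg
    simp only [eval_mul, eval_add, eval_pow, eval_X, eval_C,
      Matrix.cons_val_zero, Matrix.cons_val_one, Matrix.head_cons,
      Matrix.cons_val_two, Matrix.tail_cons, Matrix.cons_val_three]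
    norm_num
    intro h
    have hc : ε * 1 = ε * ε := by rw [mul_one, ← pow_two]; exact h
    exact hεne1 (mul_left_cancel₀ hεne0 hc).symm
end

section
/- Let K be a field containing a primitive cube root of unity ω and let G = (C3 × C3) ⋊_{−1} C2 = ⟨a,b,c | a^3=b^3=c^2=1, ab=ba, cac=a^{-1}, cbc=b^{-1}⟩ act on V = K^2 ⊕ K^2, where on the first summand a = diag(ω, ω^2), b = Id, c swaps coordinates, and on the second summand a = Id, b = diag(ω, ω^2), c swaps coordinates. Set v = ((1,0),(1,0)) and v' = ((1,0),(0,1)). Then every G-invariant polynomial of degree ≤ 5 takes equal values on v and v', but the degree-6 invariant (x1^3 − x2^3)(y1^3 − y2^3) takes values 1 and −1 respectively. Hence β_sep(G, V) ≥ 6. -/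
open MvPolynomial

lemma coeff_aeval_scale {K : Type*} [CommSemiring K] {n : ℕ} (c : Fin n → K)
    (f : MvPolynomial (Fin n) K) (m : Fin n →₀ ℕ) :
    coeff m (aeval (fun i => C (c i) * X i) f) = (∏ i, c i ^ m i) * coeff m f := by
  induction f using MvPolynomial.induction_on' with
  | add p q hp hq =>
    rw [map_add, coeff_add, hp, hq, coeff_add, mul_add]
  | monomial m' r =>
    rw [aeval_monomial]
    have h1 : (m'.prod fun i k => (C (c i) * X i : MvPolynomial (Fin n) K) ^ k)
        = C (m'.prod fun i k => c i ^ k) * m'.prod fun i k => (X i : MvPolynomial (Fin n) K) ^ k := by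
      rw [map_finsuppProd, ← Finsupp.prod_mul]
      exact Finsupp.prod_congr fun i hi => by rw [mul_pow, C_pow]
    rw [h1, algebraMap_eq, ← mul_assoc, ← C_mul, mul_comm r, ← monomial_eq, coeff_monomial,
      coeff_monomial]
    split_ifs with h
    · subst h; rw [Finsupp.prod_pow]
    · rw [mul_zero]

/-- `β_sep((C3×C3)⋊₋₁C2, V) ≥ 6`: with `G` acting on `K[x1,x2,y1,y2]` (variables
`X 0, X 1, X 2, X 3`) via `a = diag(ω,ω²)⊕Id`, `b = Id⊕diag(ω,ω²)`, `c` swapping the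
coordinates in each summand, every invariant of degree `≤ 5` agrees on `v = ((1,0),(1,0))`
and `v' = ((1,0),(0,1))`, while the degree-6 invariant `F = (x1³−x2³)(y1³−y2³)` takes the
values `1` and `−1` respectively.  A polynomial is invariant iff it is fixed by the
substitutions of the three group generators. -/
theorem stmt19 {K : Type*} [Field K] (ω : K) (hω3 : ω ^ 3 = 1) (hω1 : ω ≠ 1) :
    ∀ F : MvPolynomial (Fin 4) K,
      F = (X 0 ^ 3 - X 1 ^ 3) * (X 2 ^ 3 - X 3 ^ 3) →
      (∀ f : MvPolynomial (Fin 4) K,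
          aeval ![C ω * X 0, C (ω ^ 2) * X 1, (X 2 : MvPolynomial (Fin 4) K), X 3] f = f →
          aeval ![(X 0 : MvPolynomial (Fin 4) K), X 1, C ω * X 2, C (ω ^ 2) * X 3] f = f →
          aeval ![(X 1 : MvPolynomial (Fin 4) K), X 0, X 3, X 2] f = f →
          f.totalDegree ≤ 5 →
          eval ![1, 0, 1, 0] f = eval ![1, 0, 0, 1] f) ∧
        aeval ![C ω * X 0, C (ω ^ 2) * X 1, (X 2 : MvPolynomial (Fin 4) K), X 3] F = F ∧
        aeval ![(X 0 : MvPolynomial (Fin 4) K), X 1, C ω * X 2, C (ω ^ 2) * X 3] F = F ∧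
        aeval ![(X 1 : MvPolynomial (Fin 4) K), X 0, X 3, X 2] F = F ∧
        eval ![1, 0, 1, 0] F = 1 ∧
        eval ![1, 0, 0, 1] F = -1 := by
  have hω6 : ω ^ 6 = 1 := by
    have : ω ^ 6 = (ω ^ 3) ^ 2 := by ring
    rw [this, hω3, one_pow]
  haveI : Fact (Nat.Prime 3) := ⟨by norm_num⟩
  have horder : orderOf ω = 3 := orderOf_eq_prime hω3 hω1
  have hdvd : ∀ n : ℕ, ω ^ n = 1 → 3 ∣ n := fun n h => horder ▸ orderOf_dvd_of_pow_eq_one h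
  -- distinctness of the relevant exponent vectors
  have hs03 : (Finsupp.single (0 : Fin 4) 3 : Fin 4 →₀ ℕ) ≠ 0 := by
    intro h; have := Finsupp.ext_iff.mp h 0; simp [Finsupp.single_apply] at this
  have hs23 : (Finsupp.single (2 : Fin 4) 3 : Fin 4 →₀ ℕ) ≠ 0 := by
    intro h; have := Finsupp.ext_iff.mp h 2; simp [Finsupp.single_apply] at this
  have hs33 : (Finsupp.single (3 : Fin 4) 3 : Fin 4 →₀ ℕ) ≠ 0 := by
    intro h; have := Finsupp.ext_iff.mp h 3; simp [Finsupp.single_apply] at this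
  have hs0323 : (Finsupp.single (0 : Fin 4) 3 : Fin 4 →₀ ℕ) ≠ Finsupp.single 2 3 := by
    intro h; have := Finsupp.ext_iff.mp h 0; simp [Finsupp.single_apply] at this
  have hs0333 : (Finsupp.single (0 : Fin 4) 3 : Fin 4 →₀ ℕ) ≠ Finsupp.single 3 3 := by
    intro h; have := Finsupp.ext_iff.mp h 0; simp [Finsupp.single_apply] at this
  intro F hF
  refine ⟨?_, ?_, ?_, ?_, ?_, ?_⟩
  · -- the separation statement
    intro f ha hb hc hdeg
    -- rewrite the two scaling substitutions
    have hva : (![C ω * X 0, C (ω ^ 2) * X 1, (X 2 : MvPolynomial (Fin 4) K), X 3])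
        = fun i => C ((![ω, ω ^ 2, 1, 1] : Fin 4 → K) i) * X i := by
      funext i; fin_cases i <;> simp
    have hvb : (![(X 0 : MvPolynomial (Fin 4) K), X 1, C ω * X 2, C (ω ^ 2) * X 3])
        = fun i => C ((![1, 1, ω, ω ^ 2] : Fin 4 → K) i) * X i := by
      funext i; fin_cases i <;> simp
    rw [hva] at ha
    rw [hvb] at hb
    -- coefficient constraints from a- and b-invariance
    have key1 : ∀ d : Fin 4 →₀ ℕ, coeff d f ≠ 0 → 3 ∣ d 0 + 2 * d 1 := by
      intro d hd
      have h := congrArg (coeff d) ha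
      rw [coeff_aeval_scale] at h
      have hp : (∏ i, (![ω, ω ^ 2, 1, 1] : Fin 4 → K) i ^ d i) = ω ^ (d 0 + 2 * d 1) := by
        rw [Fin.prod_univ_four]
        simp [pow_add, pow_mul, ← pow_mul, mul_comm]
      rw [hp] at h
      exact hdvd _ (mul_right_cancel₀ hd (h.trans (one_mul _).symm))
    have key2 : ∀ d : Fin 4 →₀ ℕ, coeff d f ≠ 0 → 3 ∣ d 2 + 2 * d 3 := by
      intro d hd
      have h := congrArg (coeff d) hb
      rw [coeff_aeval_scale] at h
      have hp : (∏ i, (![1, 1, ω, ω ^ 2] : Fin 4 → K) i ^ d i) = ω ^ (d 2 + 2 * d 3) := by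
        rw [Fin.prod_univ_four]
        simp [pow_add, pow_mul, ← pow_mul, mul_comm]
      rw [hp] at h
      exact hdvd _ (mul_right_cancel₀ hd (h.trans (one_mul _).symm))
    have keydeg : ∀ d : Fin 4 →₀ ℕ, d ∈ f.support → d 0 + d 1 + d 2 + d 3 ≤ 5 := by
      intro d hd
      have h := le_trans (le_totalDegree hd) hdeg
      rwa [Finsupp.sum_fintype _ _ (fun _ => rfl), Fin.sum_univ_four] at h
    -- evaluation at v
    have hv : eval ![1, 0, 1, 0] f
        = coeff 0 f + coeff (Finsupp.single 0 3) f + coeff (Finsupp.single 2 3) f := by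
      rw [eval_eq']
      have hterm : ∀ d ∈ f.support,
          coeff d f * ∏ i, (![(1 : K), 0, 1, 0]) i ^ d i
          = (if d = 0 then coeff d f else 0) + (if d = Finsupp.single 0 3 then coeff d f else 0)
            + (if d = Finsupp.single 2 3 then coeff d f else 0) := by
        intro d hd
        by_cases h1 : d 1 = 0
        · by_cases h3 : d 3 = 0
          · have hprod : (∏ i, (![(1 : K), 0, 1, 0]) i ^ d i) = 1 := by
              rw [Fin.prod_univ_four]; simp [h1, h3]
            rw [hprod, mul_one]
            by_cases hc0 : coeff d f = 0
            · simp [hc0]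
            · have k1 := key1 d hc0
              have k2 := key2 d hc0
              rw [h1] at k1; rw [h3] at k2
              have hds := keydeg d hd
              rw [h1, h3] at hds
              have hcases : (d 0 = 0 ∧ d 2 = 0) ∨ (d 0 = 3 ∧ d 2 = 0) ∨ (d 0 = 0 ∧ d 2 = 3) := by
                omega
              rcases hcases with ⟨e0, e2⟩ | ⟨e0, e2⟩ | ⟨e0, e2⟩
              · have hd0 : d = 0 := by
                  ext i; fin_cases i <;> simp [e0, h1, e2, h3]
                rw [if_pos hd0, if_neg (by rw [hd0]; exact fun h => hs03 h.symm),
                  if_neg (by rw [hd0]; exact fun h => hs23 h.symm), add_zero, add_zero]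
              · have hd0 : d = Finsupp.single 0 3 := by
                  ext i; fin_cases i <;> simp [e0, h1, e2, h3, Finsupp.single_apply]
                rw [if_pos hd0, if_neg (by rw [hd0]; exact hs03), if_neg (by rw [hd0]; exact hs0323),
                  zero_add, add_zero]
              · have hd0 : d = Finsupp.single 2 3 := by
                  ext i; fin_cases i <;> simp [e0, h1, e2, h3, Finsupp.single_apply]
                rw [if_pos hd0, if_neg (by rw [hd0]; exact hs23),
                  if_neg (by rw [hd0]; exact fun h => hs0323 h.symm), zero_add, zero_add]
          · have hprod : (∏ i, (![(1 : K), 0, 1, 0]) i ^ d i) = 0 := by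
              rw [Fin.prod_univ_four]; simp [zero_pow h3]
            rw [hprod, mul_zero, if_neg, if_neg, if_neg]
            · simp
            · intro h; rw [h] at h3; simp [Finsupp.single_apply] at h3
            · intro h; rw [h] at h3; simp [Finsupp.single_apply] at h3
            · intro h; rw [h] at h3; simp at h3
        · have hprod : (∏ i, (![(1 : K), 0, 1, 0]) i ^ d i) = 0 := by
            rw [Fin.prod_univ_four]; simp [zero_pow h1]
          rw [hprod, mul_zero, if_neg, if_neg, if_neg]
          · simp
          · intro h; rw [h] at h1; simp [Finsupp.single_apply] at h1
          · intro h; rw [h] at h1; simp [Finsupp.single_apply] at h1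
          · intro h; rw [h] at h1; simp at h1
      rw [Finset.sum_congr rfl hterm, Finset.sum_add_distrib, Finset.sum_add_distrib,
        Finset.sum_ite_eq' f.support, Finset.sum_ite_eq' f.support, Finset.sum_ite_eq' f.support]
      congr 2 <;> [skip; skip; skip] <;> split_ifs with h <;>
        first | rfl | (rw [notMem_support_iff.mp h])
    -- evaluation at v'
    have hv' : eval ![1, 0, 0, 1] f
        = coeff 0 f + coeff (Finsupp.single 0 3) f + coeff (Finsupp.single 3 3) f := by
      rw [eval_eq']
      have hterm : ∀ d ∈ f.support,
          coeff d f * ∏ i, (![(1 : K), 0, 0, 1]) i ^ d i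
          = (if d = 0 then coeff d f else 0) + (if d = Finsupp.single 0 3 then coeff d f else 0)
            + (if d = Finsupp.single 3 3 then coeff d f else 0) := by
        intro d hd
        by_cases h1 : d 1 = 0
        · by_cases h2 : d 2 = 0
          · have hprod : (∏ i, (![(1 : K), 0, 0, 1]) i ^ d i) = 1 := by
              rw [Fin.prod_univ_four]; simp [h1, h2]
            rw [hprod, mul_one]
            by_cases hc0 : coeff d f = 0
            · simp [hc0]
            · have k1 := key1 d hc0
              have k2 := key2 d hc0
              rw [h1] at k1; rw [h2] at k2
              have hds := keydeg d hd
              rw [h1, h2] at hds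
              have hcases : (d 0 = 0 ∧ d 3 = 0) ∨ (d 0 = 3 ∧ d 3 = 0) ∨ (d 0 = 0 ∧ d 3 = 3) := by
                omega
              rcases hcases with ⟨e0, e3⟩ | ⟨e0, e3⟩ | ⟨e0, e3⟩
              · have hd0 : d = 0 := by
                  ext i; fin_cases i <;> simp [e0, h1, e3, h2]
                rw [if_pos hd0, if_neg (by rw [hd0]; exact fun h => hs03 h.symm),
                  if_neg (by rw [hd0]; exact fun h => hs33 h.symm), add_zero, add_zero]
              · have hd0 : d = Finsupp.single 0 3 := by
                  ext i; fin_cases i <;> simp [e0, h1, e3, h2, Finsupp.single_apply]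
                rw [if_pos hd0, if_neg (by rw [hd0]; exact hs03), if_neg (by rw [hd0]; exact hs0333),
                  zero_add, add_zero]
              · have hd0 : d = Finsupp.single 3 3 := by
                  ext i; fin_cases i <;> simp [e0, h1, e3, h2, Finsupp.single_apply]
                rw [if_pos hd0, if_neg (by rw [hd0]; exact hs33),
                  if_neg (by rw [hd0]; exact fun h => hs0333 h.symm), zero_add, zero_add]
          · have hprod : (∏ i, (![(1 : K), 0, 0, 1]) i ^ d i) = 0 := by
              rw [Fin.prod_univ_four]; simp [zero_pow h2]
            rw [hprod, mul_zero, if_neg, if_neg, if_neg]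
            · simp
            · intro h; rw [h] at h2; simp [Finsupp.single_apply] at h2
            · intro h; rw [h] at h2; simp [Finsupp.single_apply] at h2
            · intro h; rw [h] at h2; simp at h2
        · have hprod : (∏ i, (![(1 : K), 0, 0, 1]) i ^ d i) = 0 := by
            rw [Fin.prod_univ_four]; simp [zero_pow h1]
          rw [hprod, mul_zero, if_neg, if_neg, if_neg]
          · simp
          · intro h; rw [h] at h1; simp [Finsupp.single_apply] at h1
          · intro h; rw [h] at h1; simp [Finsupp.single_apply] at h1
          · intro h; rw [h] at h1; simp at h1
      rw [Finset.sum_congr rfl hterm, Finset.sum_add_distrib, Finset.sum_add_distrib,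
        Finset.sum_ite_eq' f.support, Finset.sum_ite_eq' f.support, Finset.sum_ite_eq' f.support]
      congr 2 <;> [skip; skip; skip] <;> split_ifs with h <;>
        first | rfl | (rw [notMem_support_iff.mp h])
    -- c-invariance identifies the two remaining coefficients
    have hswap : coeff (Finsupp.single 3 3) f = coeff (Finsupp.single 2 3) f := by
      have hσ : Function.Injective (![1, 0, 3, 2] : Fin 4 → Fin 4) := by decide
      have hre : rename (![1, 0, 3, 2] : Fin 4 → Fin 4) f = f := by
        rw [show rename (![1, 0, 3, 2] : Fin 4 → Fin 4) f
            = aeval (X ∘ (![1, 0, 3, 2] : Fin 4 → Fin 4)) f from by rw [rename_eq_aeval]]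
        rw [show (X ∘ (![1, 0, 3, 2] : Fin 4 → Fin 4) : Fin 4 → MvPolynomial (Fin 4) K)
            = ![X 1, X 0, X 3, X 2] from by funext i; fin_cases i <;> rfl]
        exact hc
      have h := coeff_rename_mapDomain (![1, 0, 3, 2] : Fin 4 → Fin 4) hσ f (Finsupp.single 2 3)
      rw [hre, Finsupp.mapDomain_single] at h
      simpa using h
    rw [hv, hv', hswap]
  · -- F is a-invariant
    subst hF
    have hC3 : (C ω : MvPolynomial (Fin 4) K) ^ 3 = 1 := by rw [← C_pow, hω3, C_1]
    have hC6 : ((C ω : MvPolynomial (Fin 4) K) ^ 2) ^ 3 = 1 := by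
      rw [← pow_mul, show 2 * 3 = 6 from rfl, ← C_pow, hω6, C_1]
    simp only [map_mul, map_sub, map_pow, aeval_X]
    simp only [Matrix.cons_val_zero, Matrix.cons_val_one, Matrix.head_cons,
      Matrix.cons_val_two, Matrix.tail_cons, Matrix.cons_val_three]
    rw [mul_pow, mul_pow, hC3, hC6, one_mul, one_mul]
  · -- F is b-invariant
    subst hF
    have hC3 : (C ω : MvPolynomial (Fin 4) K) ^ 3 = 1 := by rw [← C_pow, hω3, C_1]
    have hC6 : ((C ω : MvPolynomial (Fin 4) K) ^ 2) ^ 3 = 1 := by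
      rw [← pow_mul, show 2 * 3 = 6 from rfl, ← C_pow, hω6, C_1]
    simp only [map_mul, map_sub, map_pow, aeval_X]
    simp only [Matrix.cons_val_zero, Matrix.cons_val_one, Matrix.head_cons,
      Matrix.cons_val_two, Matrix.tail_cons, Matrix.cons_val_three]
    rw [mul_pow, mul_pow, hC3, hC6, one_mul, one_mul]
  · -- F is c-invariant
    subst hF
    simp only [map_mul, map_sub, map_pow, aeval_X]
    simp only [Matrix.cons_val_zero, Matrix.cons_val_one, Matrix.head_cons,
      Matrix.cons_val_two, Matrix.tail_cons, Matrix.cons_val_three]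
    ring
  · subst hF
    simp
  · subst hF
    simp
end
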